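/- arXiv:2207.02004 — 9 statements merged into one kernel-verified Lean document; each statement's English description precedes it below -/
import Mathlib

section
/- With L = (L_1,…,L_n), T_i ⊆ L_i ⊆ T, and the path classes P(L), H_0(L), H_1(L) as defined, the arc set of G_L decomposes as a disjoint union of the arc sets of the paths in P(L), H_0(L), and H_1(L): |A(G_L)| = Σ_{p ∈ P(L)} |A(p)| + Σ_{p ∈ H_0(L)} |A(p)| + Σ_{p ∈ H_1(L)} |A(p)|, where a path p = (s,e,t) has |A(p)| = e − s arcs. -/
def IsPipe (n : ℕ) (T L : ℕ → Finset ℕ) (s e t : ℕ) : Prop :=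
  1 ≤ s ∧ s < e ∧ e ≤ n ∧ t ∈ T s ∧ t ∈ T e ∧
    ∀ i ∈ Finset.Ioo s e, t ∉ T i ∧ t ∈ L i

def IsH1pre (n : ℕ) (T L : ℕ → Finset ℕ) (s e t : ℕ) : Prop :=
  1 ≤ s ∧ s ≤ e ∧ e ≤ n ∧ t ∈ T e ∧
    (∀ i ∈ Finset.Ico s e, t ∉ T i ∧ t ∈ L i) ∧ (t ∉ L (s - 1) ∨ s = 1)

def IsH1post (n : ℕ) (T L : ℕ → Finset ℕ) (s e t : ℕ) : Prop :=
  1 ≤ s ∧ s ≤ e ∧ e ≤ n ∧ t ∈ T s ∧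
    (∀ i ∈ Finset.Ioc s e, t ∉ T i ∧ t ∈ L i) ∧ (t ∉ L (e + 1) ∨ e = n)

def IsH0 (n : ℕ) (T L : ℕ → Finset ℕ) (s e t : ℕ) : Prop :=
  1 ≤ s ∧ s ≤ e ∧ e ≤ n ∧
    (∀ i ∈ Finset.Icc s e, t ∉ T i ∧ t ∈ L i) ∧
    (t ∉ L (s - 1) ∨ s = 1) ∧ (t ∉ L (e + 1) ∨ e = n)

-- The set of pipes of `L`, as triples `((s,e),t)`.
open Classical in
noncomputable def pipeSet (n : ℕ) (T L : ℕ → Finset ℕ) : Finset ((ℕ × ℕ) × ℕ) :=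
  ((Finset.Icc 1 n ×ˢ Finset.Icc 1 n) ×ˢ (Finset.Icc 1 n).biUnion T).filter
    (fun p => IsPipe n T L p.1.1 p.1.2 p.2)

open Classical in
noncomputable def h1Set (n : ℕ) (T L : ℕ → Finset ℕ) : Finset ((ℕ × ℕ) × ℕ) :=
  ((Finset.Icc 1 n ×ˢ Finset.Icc 1 n) ×ˢ (Finset.Icc 1 n).biUnion T).filter
    (fun p => IsH1pre n T L p.1.1 p.1.2 p.2 ∨ IsH1post n T L p.1.1 p.1.2 p.2)

open Classical in
noncomputable def h0Set (n : ℕ) (T L : ℕ → Finset ℕ) : Finset ((ℕ × ℕ) × ℕ) :=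
  ((Finset.Icc 1 n ×ˢ Finset.Icc 1 n) ×ˢ (Finset.Icc 1 n).biUnion L).filter
    (fun p => IsH0 n T L p.1.1 p.1.2 p.2)

/-! ### Auxiliary machinery -/

/-- A triple `(s,e,t)` is a path of any of the three classes. -/
def IsAny (n : ℕ) (T L : ℕ → Finset ℕ) (s e t : ℕ) : Prop :=
  IsPipe n T L s e t ∨ IsH0 n T L s e t ∨ IsH1pre n T L s e t ∨ IsH1post n T L s e t

section aux

variable {n : ℕ} {T L : ℕ → Finset ℕ}

lemma isAny_bounds {s e t : ℕ} (h : IsAny n T L s e t) : 1 ≤ s ∧ s ≤ e ∧ e ≤ n := by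
  rcases h with h | h | h | h
  · exact ⟨h.1, le_of_lt h.2.1, h.2.2.1⟩
  all_goals exact ⟨h.1, h.2.1, h.2.2.1⟩

lemma isAny_memL (hTL : ∀ i ∈ Finset.Icc 1 n, T i ⊆ L i)
    {s e t : ℕ} (h : IsAny n T L s e t) : ∀ j, s ≤ j → j ≤ e → t ∈ L j := by
  obtain ⟨h1, hse, hen⟩ := isAny_bounds h
  intro j hsj hje
  have hmem : j ∈ Finset.Icc 1 n := Finset.mem_Icc.mpr ⟨le_trans h1 hsj, le_trans hje hen⟩
  rcases h with h | h | h | h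
  · rcases eq_or_lt_of_le hsj with rfl | hs
    · exact hTL _ hmem h.2.2.2.1
    rcases eq_or_lt_of_le hje with rfl | he
    · exact hTL _ hmem h.2.2.2.2.1
    exact (h.2.2.2.2.2 j (Finset.mem_Ioo.mpr ⟨hs, he⟩)).2
  · exact (h.2.2.2.1 j (Finset.mem_Icc.mpr ⟨hsj, hje⟩)).2
  · rcases eq_or_lt_of_le hje with rfl | he
    · exact hTL _ hmem h.2.2.2.1
    · exact (h.2.2.2.2.1 j (Finset.mem_Ico.mpr ⟨hsj, he⟩)).2
  · rcases eq_or_lt_of_le hsj with rfl | hs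
    · exact hTL _ hmem h.2.2.2.1
    · exact (h.2.2.2.2.1 j (Finset.mem_Ioc.mpr ⟨hs, hje⟩)).2

lemma isAny_notT {s e t : ℕ} (h : IsAny n T L s e t) :
    ∀ j, s < j → j < e → t ∉ T j := by
  intro j hs he
  rcases h with h | h | h | h
  · exact (h.2.2.2.2.2 j (Finset.mem_Ioo.mpr ⟨hs, he⟩)).1
  · exact (h.2.2.2.1 j (Finset.mem_Icc.mpr ⟨le_of_lt hs, le_of_lt he⟩)).1
  · exact (h.2.2.2.2.1 j (Finset.mem_Ico.mpr ⟨le_of_lt hs, he⟩)).1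
  · exact (h.2.2.2.2.1 j (Finset.mem_Ioc.mpr ⟨hs, le_of_lt he⟩)).1

lemma isAny_startP (hout : ∀ i, i ∉ Finset.Icc 1 n → T i = ∅ ∧ L i = ∅)
    {s e t : ℕ} (h : IsAny n T L s e t) : t ∈ T s ∨ t ∉ L (s - 1) := by
  have hL0 : L 0 = ∅ := (hout 0 (by simp)).2
  rcases h with h | h | h | h
  · exact Or.inl h.2.2.2.1
  · rcases h.2.2.2.2.1 with h' | h'
    · exact Or.inr h'
    · subst h'; simp [hL0]
  · rcases h.2.2.2.2.2 with h' | h'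
    · exact Or.inr h'
    · subst h'; simp [hL0]
  · exact Or.inl h.2.2.2.1

lemma isAny_endP (hout : ∀ i, i ∉ Finset.Icc 1 n → T i = ∅ ∧ L i = ∅)
    {s e t : ℕ} (h : IsAny n T L s e t) : t ∈ T e ∨ t ∉ L (e + 1) := by
  have hLn : L (n + 1) = ∅ := (hout (n + 1) (by simp [Finset.mem_Icc])).2
  rcases h with h | h | h | h
  · exact Or.inl h.2.2.2.2.1
  · rcases h.2.2.2.2.2 with h' | h'
    · exact Or.inr h'
    · subst h'; simp [hLn]
  · exact Or.inl h.2.2.2.1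
  · rcases h.2.2.2.2.2 with h' | h'
    · exact Or.inr h'
    · subst h'; simp [hLn]

/-- If a path starts at `s` and another path (with the same token) covers positions around `s`,
then `s ≤ s'` is forced. -/
lemma isAny_start_le (hTL : ∀ i ∈ Finset.Icc 1 n, T i ⊆ L i)
    (hout : ∀ i, i ∉ Finset.Icc 1 n → T i = ∅ ∧ L i = ∅)
    {s e s' e' t i : ℕ} (h : IsAny n T L s e t) (h' : IsAny n T L s' e' t)
    (hsi : s ≤ i) (hie' : i < e') : s ≤ s' := by
  by_contra hc
  push_neg at hc
  have hnT : t ∉ T s := isAny_notT h' s hc (lt_of_le_of_lt hsi hie')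
  have hnL : t ∉ L (s - 1) := (isAny_startP hout h).resolve_left hnT
  exact hnL (isAny_memL hTL h' (s - 1) (by omega) (by omega))

lemma isAny_end_le (hTL : ∀ i ∈ Finset.Icc 1 n, T i ⊆ L i)
    (hout : ∀ i, i ∉ Finset.Icc 1 n → T i = ∅ ∧ L i = ∅)
    {s e s' e' t i : ℕ} (h : IsAny n T L s e t) (h' : IsAny n T L s' e' t)
    (hs'i : s' ≤ i) (hie : i < e) : e' ≤ e := by
  by_contra hc
  push_neg at hc
  have hnT : t ∉ T e := isAny_notT h' e (lt_of_le_of_lt hs'i hie) hc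
  have hnL : t ∉ L (e + 1) := (isAny_endP hout h).resolve_left hnT
  exact hnL (isAny_memL hTL h' (e + 1) (by omega) (by omega))

lemma isAny_unique (hTL : ∀ i ∈ Finset.Icc 1 n, T i ⊆ L i)
    (hout : ∀ i, i ∉ Finset.Icc 1 n → T i = ∅ ∧ L i = ∅)
    {s e s' e' t i : ℕ} (h : IsAny n T L s e t) (h' : IsAny n T L s' e' t)
    (hsi : s ≤ i) (hie : i < e) (hs'i : s' ≤ i) (hie' : i < e') : s = s' ∧ e = e' := by
  refine ⟨le_antisymm ?_ ?_, le_antisymm ?_ ?_⟩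
  · exact isAny_start_le hTL hout h h' hsi hie'
  · exact isAny_start_le hTL hout h' h hs'i hie
  · exact isAny_end_le hTL hout h' h hsi hie'
  · exact isAny_end_le hTL hout h h' hs'i hie

open Classical in
/-- Existence: every arc `(i, i+1)` carrying token `t` lies on some path. -/
lemma exists_any (hout : ∀ i, i ∉ Finset.Icc 1 n → T i = ∅ ∧ L i = ∅)
    {i t : ℕ} (hi1 : 1 ≤ i) (hin : i ≤ n - 1) (hn : 1 ≤ n)
    (h1 : t ∈ L i) (h2 : t ∈ L (i + 1)) :
    ∃ s e, IsAny n T L s e t ∧ s ≤ i ∧ i < e := by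
  have hL0 : L 0 = ∅ := (hout 0 (by simp)).2
  have hLn : L (n + 1) = ∅ := (hout (n + 1) (by simp [Finset.mem_Icc])).2
  have hi1n : i + 1 ≤ n := by omega
  set P : ℕ → Prop := fun j => 1 ≤ j ∧ (t ∈ T j ∨ t ∉ L (j - 1)) with hP
  have hP1 : P 1 := ⟨le_refl 1, Or.inr (by simp [hL0])⟩
  set s := Nat.findGreatest P i with hs
  have hPs : P s := Nat.findGreatest_spec hi1 hP1
  have hs_le : s ≤ i := Nat.findGreatest_le i
  have hs1 : 1 ≤ s := hPs.1
  have hmax : ∀ j, s < j → j ≤ i → t ∉ T j ∧ t ∈ L (j - 1) := by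
    intro j hj hji
    have hnP : ¬ P j := Nat.findGreatest_is_greatest hj hji
    simp only [hP, not_and, not_or, not_not] at hnP
    exact hnP (by omega)
  set Q : ℕ → Prop := fun j => i + 1 ≤ j ∧ (t ∈ T j ∨ t ∉ L (j + 1)) with hQ
  have hQn : Q n := ⟨hi1n, Or.inr (by simp [hLn])⟩
  have hex : ∃ j, Q j := ⟨n, hQn⟩
  set e := Nat.find hex with he
  have hQe : Q e := Nat.find_spec hex
  have he_le : e ≤ n := Nat.find_min' hex hQn
  have hie : i + 1 ≤ e := hQe.1
  have hmin : ∀ j, i + 1 ≤ j → j < e → t ∉ T j ∧ t ∈ L (j + 1) := by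
    intro j hj hje
    have hnQ : ¬ Q j := Nat.find_min hex hje
    simp only [hQ, not_and, not_or, not_not] at hnQ
    exact hnQ hj
  have hLall : ∀ j, s ≤ j → j ≤ e → t ∈ L j := by
    intro j hsj hje
    by_cases hji : j ≤ i
    · rcases eq_or_lt_of_le hji with rfl | hlt
      · exact h1
      · have := (hmax (j + 1) (by omega) (by omega)).2
        simpa using this
    · by_cases hji' : j = i + 1
      · subst hji'; exact h2
      · have h' := (hmin (j - 1) (by omega) (by omega)).2
        rwa [Nat.sub_add_cancel (by omega)] at h'
  have hTnone : ∀ j, s < j → j < e → t ∉ T j := by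
    intro j hsj hje
    by_cases hji : j ≤ i
    · exact (hmax j hsj hji).1
    · exact (hmin j (by omega) hje).1
  refine ⟨s, e, ?_, hs_le, by omega⟩
  by_cases hTs : t ∈ T s <;> by_cases hTe : t ∈ T e
  · -- pipe
    refine Or.inl ⟨hs1, by omega, he_le, hTs, hTe, ?_⟩
    intro j hj
    rw [Finset.mem_Ioo] at hj
    exact ⟨hTnone j hj.1 hj.2, hLall j (le_of_lt hj.1) (le_of_lt hj.2)⟩
  · -- H1post
    refine Or.inr (Or.inr (Or.inr ⟨hs1, by omega, he_le, hTs, ?_, ?_⟩))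
    · intro j hj
      rw [Finset.mem_Ioc] at hj
      refine ⟨?_, hLall j (le_of_lt hj.1) hj.2⟩
      rcases eq_or_lt_of_le hj.2 with rfl | hlt
      · exact hTe
      · exact hTnone j hj.1 hlt
    · exact Or.inl ((hQe.2).resolve_left hTe)
  · -- H1pre
    refine Or.inr (Or.inr (Or.inl ⟨hs1, by omega, he_le, hTe, ?_, ?_⟩))
    · intro j hj
      rw [Finset.mem_Ico] at hj
      refine ⟨?_, hLall j hj.1 (le_of_lt hj.2)⟩
      rcases eq_or_lt_of_le hj.1 with rfl | hlt
      · exact hTs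
      · exact hTnone j hlt hj.2
    · exact Or.inl ((hPs.2).resolve_left hTs)
  · -- H0
    refine Or.inr (Or.inl ⟨hs1, by omega, he_le, ?_, Or.inl ((hPs.2).resolve_left hTs),
      Or.inl ((hQe.2).resolve_left hTe)⟩)
    intro j hj
    rw [Finset.mem_Icc] at hj
    refine ⟨?_, hLall j hj.1 hj.2⟩
    rcases eq_or_lt_of_le hj.1 with rfl | hlt
    · exact hTs
    rcases eq_or_lt_of_le hj.2 with rfl | hlt'
    · exact hTe
    exact hTnone j hlt hlt'

lemma mem_pipeSet {p : (ℕ × ℕ) × ℕ} :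
    p ∈ pipeSet n T L ↔ IsPipe n T L p.1.1 p.1.2 p.2 := by
  classical
  unfold pipeSet
  rw [Finset.mem_filter]
  simp only [Finset.mem_product, Finset.mem_biUnion, Finset.mem_Icc]
  constructor
  · rintro ⟨_, h⟩; exact h
  · intro h
    obtain ⟨h1, h2, h3, h4, -⟩ := id h
    exact ⟨⟨⟨⟨h1, by omega⟩, ⟨by omega, h3⟩⟩, ⟨p.1.1, ⟨h1, by omega⟩, h4⟩⟩, h⟩

lemma mem_h1Set {p : (ℕ × ℕ) × ℕ} :
    p ∈ h1Set n T L ↔ IsH1pre n T L p.1.1 p.1.2 p.2 ∨ IsH1post n T L p.1.1 p.1.2 p.2 := by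
  classical
  unfold h1Set
  rw [Finset.mem_filter]
  simp only [Finset.mem_product, Finset.mem_biUnion, Finset.mem_Icc]
  constructor
  · rintro ⟨_, h⟩; exact h
  · rintro (h | h)
    · obtain ⟨h1, h2, h3, h4, -⟩ := id h
      exact ⟨⟨⟨⟨h1, by omega⟩, ⟨by omega, h3⟩⟩, ⟨p.1.2, ⟨by omega, h3⟩, h4⟩⟩, Or.inl h⟩
    · obtain ⟨h1, h2, h3, h4, -⟩ := id h
      exact ⟨⟨⟨⟨h1, by omega⟩, ⟨by omega, h3⟩⟩, ⟨p.1.1, ⟨h1, by omega⟩, h4⟩⟩, Or.inr h⟩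

lemma mem_h0Set {p : (ℕ × ℕ) × ℕ} :
    p ∈ h0Set n T L ↔ IsH0 n T L p.1.1 p.1.2 p.2 := by
  classical
  unfold h0Set
  rw [Finset.mem_filter]
  simp only [Finset.mem_product, Finset.mem_biUnion, Finset.mem_Icc]
  constructor
  · rintro ⟨_, h⟩; exact h
  · intro h
    obtain ⟨h1, h2, h3, h4, -⟩ := id h
    have hLs : p.2 ∈ L p.1.1 := (h4 p.1.1 (Finset.mem_Icc.mpr ⟨le_refl _, h2⟩)).2
    exact ⟨⟨⟨⟨h1, by omega⟩, ⟨by omega, h3⟩⟩, ⟨p.1.1, ⟨h1, by omega⟩, hLs⟩⟩, h⟩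

end aux

/-- Lemma 2: the arc set of `G_L` decomposes as a disjoint union of the arc sets of the
paths in `P(L)`, `H_0(L)` and `H_1(L)`; a path `(s,e,t)` has `e - s` arcs. -/
theorem arcs_decomposition (n : ℕ) (T L : ℕ → Finset ℕ) (hn : 1 ≤ n)
    (hTL : ∀ i ∈ Finset.Icc 1 n, T i ⊆ L i)
    (hout : ∀ i, i ∉ Finset.Icc 1 n → T i = ∅ ∧ L i = ∅) :
    ∑ i ∈ Finset.Icc 1 (n - 1), ((L i) ∩ (L (i + 1))).card
      = ∑ p ∈ pipeSet n T L, (p.1.2 - p.1.1)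
        + ∑ p ∈ h0Set n T L, (p.1.2 - p.1.1)
        + ∑ p ∈ h1Set n T L, (p.1.2 - p.1.1) := by
  classical
  -- Step 1: rewrite each path-length sum as a per-arc sum
  have key : ∀ S : Finset ((ℕ × ℕ) × ℕ), (∀ p ∈ S, 1 ≤ p.1.1 ∧ p.1.2 ≤ n) →
      ∑ p ∈ S, (p.1.2 - p.1.1)
        = ∑ i ∈ Finset.Icc 1 (n - 1),
            (S.filter (fun p => p.1.1 ≤ i ∧ i < p.1.2)).card := by
    intro S hS
    calc ∑ p ∈ S, (p.1.2 - p.1.1)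
        = ∑ p ∈ S, ∑ i ∈ Finset.Icc 1 (n - 1),
            (if p.1.1 ≤ i ∧ i < p.1.2 then 1 else 0) := by
          refine Finset.sum_congr rfl fun p hp => ?_
          obtain ⟨hp1, hp2⟩ := hS p hp
          rw [← Finset.card_filter]
          have hfe : Finset.filter (fun i => p.1.1 ≤ i ∧ i < p.1.2) (Finset.Icc 1 (n - 1))
              = Finset.Ico p.1.1 p.1.2 := by
            ext j
            simp only [Finset.mem_filter, Finset.mem_Icc, Finset.mem_Ico]
            omega
          rw [hfe, Nat.card_Ico]
      _ = ∑ i ∈ Finset.Icc 1 (n - 1), ∑ p ∈ S,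
            (if p.1.1 ≤ i ∧ i < p.1.2 then 1 else 0) := Finset.sum_comm
      _ = ∑ i ∈ Finset.Icc 1 (n - 1),
            (S.filter (fun p => p.1.1 ≤ i ∧ i < p.1.2)).card := by
          exact Finset.sum_congr rfl fun i _ => (Finset.card_filter _ _).symm
  have hPb : ∀ p ∈ pipeSet n T L, 1 ≤ p.1.1 ∧ p.1.2 ≤ n := by
    intro p hp
    have h := mem_pipeSet.mp hp
    exact ⟨h.1, h.2.2.1⟩
  have hH0b : ∀ p ∈ h0Set n T L, 1 ≤ p.1.1 ∧ p.1.2 ≤ n := by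
    intro p hp
    have h := mem_h0Set.mp hp
    exact ⟨h.1, h.2.2.1⟩
  have hH1b : ∀ p ∈ h1Set n T L, 1 ≤ p.1.1 ∧ p.1.2 ≤ n := by
    intro p hp
    rcases mem_h1Set.mp hp with h | h
    · exact ⟨h.1, h.2.2.1⟩
    · exact ⟨h.1, h.2.2.1⟩
  rw [key _ hPb, key _ hH0b, key _ hH1b, ← Finset.sum_add_distrib, ← Finset.sum_add_distrib]
  refine Finset.sum_congr rfl fun i hi => ?_
  rw [Finset.mem_Icc] at hi
  obtain ⟨hi1, hin⟩ := hi
  set C : (ℕ × ℕ) × ℕ → Prop := fun p => p.1.1 ≤ i ∧ i < p.1.2 with hC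
  set Pf := (pipeSet n T L).filter C with hPf
  set H0f := (h0Set n T L).filter C with hH0f
  set H1f := (h1Set n T L).filter C with hH1f
  -- membership in any filtered set gives IsAny + covering
  have hmemP : ∀ p, p ∈ Pf ∪ H0f ∪ H1f →
      IsAny n T L p.1.1 p.1.2 p.2 ∧ p.1.1 ≤ i ∧ i < p.1.2 := by
    intro p hp
    simp only [hPf, hH0f, hH1f, Finset.mem_union, Finset.mem_filter] at hp
    rcases hp with (⟨hp, hc⟩ | ⟨hp, hc⟩) | ⟨hp, hc⟩
    · exact ⟨Or.inl (mem_pipeSet.mp hp), hc⟩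
    · exact ⟨Or.inr (Or.inl (mem_h0Set.mp hp)), hc⟩
    · rcases mem_h1Set.mp hp with h | h
      · exact ⟨Or.inr (Or.inr (Or.inl h)), hc⟩
      · exact ⟨Or.inr (Or.inr (Or.inr h)), hc⟩
  -- disjointness of the three filtered sets
  have hd1 : Disjoint Pf H0f := by
    rw [Finset.disjoint_left]
    intro p hp hq
    simp only [hPf, hH0f, Finset.mem_filter] at hp hq
    have h1 := mem_pipeSet.mp hp.1
    have h2 := mem_h0Set.mp hq.1
    exact (h2.2.2.2.1 p.1.1 (Finset.mem_Icc.mpr ⟨le_refl _, h2.2.1⟩)).1 h1.2.2.2.1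
  have hd2 : Disjoint (Pf ∪ H0f) H1f := by
    rw [Finset.disjoint_left]
    intro p hp hq
    simp only [hPf, hH0f, hH1f, Finset.mem_union, Finset.mem_filter] at hp hq
    have hse : p.1.1 < p.1.2 := by
      rcases hp with ⟨_, hc⟩ | ⟨_, hc⟩ <;> omega
    rcases hp with ⟨hp, -⟩ | ⟨hp, -⟩
    · have h1 := mem_pipeSet.mp hp
      rcases mem_h1Set.mp hq.1 with h | h
      · exact (h.2.2.2.2.1 p.1.1 (Finset.mem_Ico.mpr ⟨le_refl _, hse⟩)).1 h1.2.2.2.1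
      · exact (h.2.2.2.2.1 p.1.2 (Finset.mem_Ioc.mpr ⟨hse, le_refl _⟩)).1 h1.2.2.2.2.1
    · have h1 := mem_h0Set.mp hp
      rcases mem_h1Set.mp hq.1 with h | h
      · exact (h1.2.2.2.1 p.1.2 (Finset.mem_Icc.mpr ⟨le_of_lt hse, le_refl _⟩)).1 h.2.2.2.1
      · exact (h1.2.2.2.1 p.1.1 (Finset.mem_Icc.mpr ⟨le_refl _, le_of_lt hse⟩)).1 h.2.2.2.1
  rw [← Finset.card_union_of_disjoint hd1, ← Finset.card_union_of_disjoint hd2]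
  -- bijection with the tokens on arc i
  refine Finset.card_bij (fun p _ => p.2) ?_ ?_ ?_ |>.symm
  · intro p hp
    obtain ⟨hAny, hc1, hc2⟩ := hmemP p hp
    exact Finset.mem_inter.mpr
      ⟨isAny_memL hTL hAny i hc1 (le_of_lt hc2),
       isAny_memL hTL hAny (i + 1) (by omega) (by omega)⟩
  · intro p hp q hq hpq
    obtain ⟨hAp, hp1, hp2⟩ := hmemP p hp
    obtain ⟨hAq, hq1, hq2⟩ := hmemP q hq
    have hpq' : p.2 = q.2 := hpq
    rw [hpq'] at hAp
    obtain ⟨h1, h2⟩ := isAny_unique hTL hout hAp hAq hp1 hp2 hq1 hq2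
    exact Prod.ext (Prod.ext h1 h2) hpq'
  · intro t ht
    rw [Finset.mem_inter] at ht
    obtain ⟨s, e, hAny, hsi, hie⟩ := exists_any hout hi1 hin hn ht.1 ht.2
    refine ⟨((s, e), t), ?_, rfl⟩
    simp only [hPf, hH0f, hH1f, Finset.mem_union, Finset.mem_filter]
    rcases hAny with h | h | h | h
    · exact Or.inl (Or.inl ⟨mem_pipeSet.mpr h, hsi, hie⟩)
    · exact Or.inl (Or.inr ⟨mem_h0Set.mpr h, hsi, hie⟩)
    · exact Or.inr ⟨mem_h1Set.mpr (Or.inl h), hsi, hie⟩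
    · exact Or.inr ⟨mem_h1Set.mpr (Or.inr h), hsi, hie⟩
end

section
/- Let L = (L_1,…,L_n) with T_i ⊆ L_i, |L_i| = C for all i (so L ∈ M, full magazines). Then switches(L) = Σ_{i=1}^n |T_i| − C − |P(L)| + |H_0(L)|, where P(L) is the set of pipes of L and H_0(L) is the set of fully-useless maximal segments of L. -/
def switches (n : ℕ) (L : ℕ → Finset ℕ) : ℕ :=
  ∑ i ∈ Finset.Icc 1 (n - 1), ((L (i + 1)) \ (L i)).card

lemma isPipe_left_unique {n : ℕ} {T L : ℕ → Finset ℕ} {s₁ s₂ e t : ℕ}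
    (h₁ : IsPipe n T L s₁ e t) (h₂ : IsPipe n T L s₂ e t) : s₁ = s₂ := by
  by_contra hne
  rcases Nat.lt_or_ge s₁ s₂ with h | h
  · exact (h₁.2.2.2.2.2 s₂ (Finset.mem_Ioo.2 ⟨h, h₂.2.1⟩)).1 h₂.2.2.2.1
  · have h' : s₂ < s₁ := by omega
    exact (h₂.2.2.2.2.2 s₁ (Finset.mem_Ioo.2 ⟨h', h₁.2.1⟩)).1 h₁.2.2.2.1

lemma isH0_right_unique {n : ℕ} {T L : ℕ → Finset ℕ} {s e₁ e₂ t : ℕ}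
    (h₁ : IsH0 n T L s e₁ t) (h₂ : IsH0 n T L s e₂ t) : e₁ = e₂ := by
  by_contra hne
  wlog h : e₁ < e₂ generalizing e₁ e₂
  · exact this h₂ h₁ (Ne.symm hne) (by
      obtain ⟨-, h12, -⟩ := h₁
      obtain ⟨-, h22, -⟩ := h₂
      omega)
  obtain ⟨h11, h12, h13, h14, h15, h16⟩ := h₁
  obtain ⟨h21, h22, h23, h24, h25, h26⟩ := h₂
  have hnL : t ∉ L (e₁ + 1) := by
    rcases h16 with h' | h'
    · exact h'
    · omega
  exact hnL (h24 (e₁+1) (Finset.mem_Icc.2 ⟨by omega, by omega⟩)).2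

open Classical in
lemma pipe_fiber_card (n : ℕ) (T L : ℕ → Finset ℕ) (t : ℕ) :
    ((pipeSet n T L).filter (fun p => p.2 = t)).card
      = ((Finset.Icc 1 n).filter (fun e => ∃ s, IsPipe n T L s e t)).card := by
  classical
  refine Finset.card_bij (fun p _ => p.1.2) ?_ ?_ ?_
  · rintro ⟨⟨s, e⟩, u⟩ hp
    simp only [pipeSet, Finset.mem_filter] at hp
    obtain ⟨⟨-, hpipe⟩, hut⟩ := hp
    subst hut
    show e ∈ _
    rw [Finset.mem_filter, Finset.mem_Icc]
    obtain ⟨h1, h2, h3, -, -, -⟩ := id hpipe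
    exact ⟨⟨by omega, h3⟩, s, hpipe⟩
  · rintro ⟨⟨s₁, e₁⟩, u₁⟩ hp₁ ⟨⟨s₂, e₂⟩, u₂⟩ hp₂ heq
    simp only [pipeSet, Finset.mem_filter] at hp₁ hp₂
    obtain ⟨⟨-, hpipe₁⟩, h1t⟩ := hp₁
    obtain ⟨⟨-, hpipe₂⟩, h2t⟩ := hp₂
    subst h1t; subst h2t; subst heq
    have := isPipe_left_unique hpipe₁ hpipe₂
    simp [this]
  · intro e he
    rw [Finset.mem_filter, Finset.mem_Icc] at he
    obtain ⟨⟨he1, he2⟩, s, hp⟩ := he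
    refine ⟨((s, e), t), ?_, rfl⟩
    simp only [pipeSet, Finset.mem_filter, Finset.mem_product]
    obtain ⟨h1, h2, h3, h4, -, -⟩ := id hp
    exact ⟨⟨⟨⟨Finset.mem_Icc.2 ⟨h1, by omega⟩, Finset.mem_Icc.2 ⟨by omega, h3⟩⟩,
      Finset.mem_biUnion.2 ⟨s, Finset.mem_Icc.2 ⟨h1, by omega⟩, h4⟩⟩, hp⟩, trivial⟩

open Classical in
lemma h0_fiber_card (n : ℕ) (T L : ℕ → Finset ℕ) (t : ℕ) :
    ((h0Set n T L).filter (fun p => p.2 = t)).card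
      = ((Finset.Icc 1 n).filter (fun s => ∃ e, IsH0 n T L s e t)).card := by
  classical
  refine Finset.card_bij (fun p _ => p.1.1) ?_ ?_ ?_
  · rintro ⟨⟨s, e⟩, u⟩ hp
    simp only [h0Set, Finset.mem_filter] at hp
    obtain ⟨⟨-, h0⟩, hut⟩ := hp
    subst hut
    show s ∈ _
    rw [Finset.mem_filter, Finset.mem_Icc]
    obtain ⟨h1, h2, h3, -, -, -⟩ := id h0
    exact ⟨⟨h1, by omega⟩, e, h0⟩
  · rintro ⟨⟨s₁, e₁⟩, u₁⟩ hp₁ ⟨⟨s₂, e₂⟩, u₂⟩ hp₂ heq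
    simp only [h0Set, Finset.mem_filter] at hp₁ hp₂
    obtain ⟨⟨-, h01⟩, h1t⟩ := hp₁
    obtain ⟨⟨-, h02⟩, h2t⟩ := hp₂
    subst h1t; subst h2t; subst heq
    have := isH0_right_unique h01 h02
    simp [this]
  · intro s hs
    rw [Finset.mem_filter, Finset.mem_Icc] at hs
    obtain ⟨⟨hs1, hs2⟩, e, h0⟩ := hs
    refine ⟨((s, e), t), ?_, rfl⟩
    simp only [h0Set, Finset.mem_filter, Finset.mem_product]
    obtain ⟨h1, h2, h3, h4, -, -⟩ := id h0
    have htLs : t ∈ L s := (h4 s (Finset.mem_Icc.2 ⟨le_refl s, h2⟩)).2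
    exact ⟨⟨⟨⟨Finset.mem_Icc.2 ⟨h1, by omega⟩, Finset.mem_Icc.2 ⟨by omega, h3⟩⟩,
      Finset.mem_biUnion.2 ⟨s, Finset.mem_Icc.2 ⟨h1, by omega⟩, htLs⟩⟩, h0⟩, trivial⟩

lemma starts_card (n : ℕ) (L : ℕ → Finset ℕ) (t : ℕ) (hn : 1 ≤ n) (hL0 : L 0 = ∅) :
    ((Finset.Icc 1 n).filter (fun s => t ∈ L s ∧ t ∉ L (s-1))).card
      = ((Finset.Icc 1 (n-1)).filter (fun i => t ∈ L (i+1) ∧ t ∉ L i)).card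
        + (if t ∈ L 1 then 1 else 0) := by
  classical
  have hsplit : Finset.Icc 1 n = insert 1 (Finset.Icc 2 n) := by
    ext x; simp only [Finset.mem_Icc, Finset.mem_insert]; omega
  have hcard : ((Finset.Icc 2 n).filter (fun s => t ∈ L s ∧ t ∉ L (s-1))).card
      = ((Finset.Icc 1 (n-1)).filter (fun i => t ∈ L (i+1) ∧ t ∉ L i)).card := by
    refine Finset.card_bij (fun s _ => s - 1) ?_ ?_ ?_
    · intro s hs
      rw [Finset.mem_filter, Finset.mem_Icc] at hs
      show s - 1 ∈ _
      rw [Finset.mem_filter, Finset.mem_Icc]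
      have h1 : s - 1 + 1 = s := by omega
      refine ⟨⟨by omega, by omega⟩, ?_, hs.2.2⟩
      rw [h1]; exact hs.2.1
    · intro a ha b hb hab
      rw [Finset.mem_filter, Finset.mem_Icc] at ha hb
      have hab' : a - 1 = b - 1 := hab
      omega
    · intro i hi
      rw [Finset.mem_filter, Finset.mem_Icc] at hi
      refine ⟨i + 1, ?_, ?_⟩
      · rw [Finset.mem_filter, Finset.mem_Icc]
        exact ⟨⟨by omega, by omega⟩, hi.2.1, by simpa using hi.2.2⟩
      · show i + 1 - 1 = i
        omega
  rw [hsplit, Finset.filter_insert]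
  by_cases h1 : t ∈ L 1
  · rw [if_pos (show t ∈ L 1 ∧ t ∉ L (1-1) by simp [h1, hL0])]
    rw [Finset.card_insert_of_notMem (by
      simp only [Finset.mem_filter, Finset.mem_Icc]
      omega)]
    simp [hcard, h1]
  · rw [if_neg (by simp [h1] : ¬(t ∈ L 1 ∧ t ∉ L (1-1)))]
    simp [hcard, h1]

open Classical in
lemma core_count (n : ℕ) (T L : ℕ → Finset ℕ) (t : ℕ)
    (hTL : ∀ i, T i ⊆ L i) (hLout : ∀ i, i ∉ Finset.Icc 1 n → L i = ∅) :
    ((Finset.Icc 1 n).filter (fun s => t ∈ L s ∧ t ∉ L (s-1))).card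
      + ((Finset.Icc 1 n).filter (fun e => ∃ s, IsPipe n T L s e t)).card
    = ((Finset.Icc 1 n).filter (fun i => t ∈ T i)).card
      + ((Finset.Icc 1 n).filter (fun s => ∃ e, IsH0 n T L s e t)).card := by
  classical
  have hLmem : ∀ {i}, t ∈ L i → 1 ≤ i ∧ i ≤ n := by
    intro i hi
    by_contra h
    have : L i = ∅ := hLout i (by simpa [Finset.mem_Icc] using h)
    simp [this] at hi
  set St := (Finset.Icc 1 n).filter (fun s => t ∈ L s ∧ t ∉ L (s-1)) with hStdef
  set PE := (Finset.Icc 1 n).filter (fun e => ∃ s, IsPipe n T L s e t) with hPEdef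
  set K := (Finset.Icc 1 n).filter (fun i => t ∈ T i) with hKdef
  set H0S := (Finset.Icc 1 n).filter (fun s => ∃ e, IsH0 n T L s e t) with hH0def
  have hPEK : PE ⊆ K := by
    intro e he
    rw [hPEdef, Finset.mem_filter] at he
    rcases he.2 with ⟨s, hp⟩
    exact Finset.mem_filter.2 ⟨he.1, hp.2.2.2.2.1⟩
  have hH0St : H0S ⊆ St := by
    intro s hs
    rw [hH0def, Finset.mem_filter] at hs
    rcases hs.2 with ⟨e, h⟩
    refine Finset.mem_filter.2 ⟨hs.1, ?_, ?_⟩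
    · exact (h.2.2.2.1 s (by simp [Finset.mem_Icc, h.2.1])).2
    · rcases h.2.2.2.2.1 with h' | h'
      · exact h'
      · intro hc
        have := hLmem hc
        omega
  suffices hmain : (St \ H0S).card = (K \ PE).card by
    have h1 := Finset.card_sdiff_add_card_eq_card hH0St
    have h2 := Finset.card_sdiff_add_card_eq_card hPEK
    omega
  -- block end
  set be : ℕ → ℕ := fun s => Nat.findGreatest (fun e => ∀ j ∈ Finset.Icc s e, t ∈ L j) n
    with hbedef
  have be_spec : ∀ s, t ∈ L s →
      s ≤ be s ∧ (∀ j ∈ Finset.Icc s (be s), t ∈ L j) ∧ be s ≤ n ∧ t ∉ L (be s + 1) := by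
    intro s hs
    have hsn := hLmem hs
    have hps : ∀ j ∈ Finset.Icc s s, t ∈ L j := by
      intro j hj
      have : j = s := by simpa [Finset.mem_Icc, le_antisymm_iff] using hj
      simpa [this] using hs
    have h1 : s ≤ be s := Nat.le_findGreatest hsn.2 hps
    have h2 : ∀ j ∈ Finset.Icc s (be s), t ∈ L j :=
      Nat.findGreatest_spec (P := fun e => ∀ j ∈ Finset.Icc s e, t ∈ L j) hsn.2 hps
    have h3 : be s ≤ n := Nat.findGreatest_le n
    refine ⟨h1, h2, h3, ?_⟩
    intro hc
    rcases eq_or_lt_of_le h3 with heq | hlt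
    · have : L (n+1) = ∅ := hLout (n+1) (by simp [Finset.mem_Icc])
      rw [heq] at hc
      simp [this] at hc
    · have hnext : ∀ j ∈ Finset.Icc s (be s + 1), t ∈ L j := by
        intro j hj
        rw [Finset.mem_Icc] at hj
        rcases Nat.lt_or_ge j (be s + 1) with h' | h'
        · exact h2 j (Finset.mem_Icc.2 ⟨hj.1, by omega⟩)
        · have : j = be s + 1 := by omega
          simpa [this] using hc
      have : be s + 1 ≤ be s := Nat.le_findGreatest (P := fun e => ∀ j ∈ Finset.Icc s e, t ∈ L j)
        (by omega : be s + 1 ≤ n) hnext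
      omega
  -- first T-occurrence at or after s
  set f : ℕ → ℕ := fun s => sInf {i | s ≤ i ∧ t ∈ T i} with hfdef
  have hf_spec : ∀ s ∈ St \ H0S,
      s ≤ f s ∧ f s ≤ be s ∧ t ∈ T (f s) ∧ ∀ j, s ≤ j → j < f s → t ∉ T j := by
    intro s hs
    rw [Finset.mem_sdiff] at hs
    obtain ⟨hsSt, hsH0⟩ := hs
    rw [hStdef, Finset.mem_filter, Finset.mem_Icc] at hsSt
    obtain ⟨⟨hs1, hsn⟩, hsL, hsL'⟩ := hsSt
    obtain ⟨hbe1, hbe2, hbe3, hbe4⟩ := be_spec s hsL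
    -- the block of s contains a T-occurrence
    have hex : ∃ i, (s ≤ i ∧ i ≤ be s) ∧ t ∈ T i := by
      by_contra hno
      push_neg at hno
      apply hsH0
      rw [hH0def, Finset.mem_filter, Finset.mem_Icc]
      refine ⟨⟨hs1, hsn⟩, be s, hs1, hbe1, hbe3, ?_, Or.inl hsL', Or.inl hbe4⟩
      intro i hi
      rw [Finset.mem_Icc] at hi
      exact ⟨hno i hi, hbe2 i (Finset.mem_Icc.2 hi)⟩
    obtain ⟨i₀, hi₀, hTi₀⟩ := hex
    have hne : {i | s ≤ i ∧ t ∈ T i}.Nonempty := ⟨i₀, hi₀.1, hTi₀⟩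
    have hmem := Nat.sInf_mem hne
    have hle : f s ≤ i₀ := Nat.sInf_le ⟨hi₀.1, hTi₀⟩
    refine ⟨hmem.1, le_trans hle hi₀.2, hmem.2, ?_⟩
    intro j hj1 hj2 hTj
    have hle2 : f s ≤ j := Nat.sInf_le (show j ∈ {i | s ≤ i ∧ t ∈ T i} from ⟨hj1, hTj⟩)
    omega
  have hmaps : ∀ s ∈ St \ H0S, f s ∈ K \ PE := by
    intro s hs
    have hs' := hs
    rw [Finset.mem_sdiff] at hs'
    obtain ⟨hsSt, _⟩ := hs'
    rw [hStdef, Finset.mem_filter, Finset.mem_Icc] at hsSt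
    obtain ⟨⟨hs1, hsn⟩, hsL, hsL'⟩ := hsSt
    obtain ⟨hbe1, hbe2, hbe3, hbe4⟩ := be_spec s hsL
    obtain ⟨hf1, hf2, hf3, hf4⟩ := hf_spec s hs
    rw [Finset.mem_sdiff]
    constructor
    · rw [hKdef, Finset.mem_filter, Finset.mem_Icc]
      exact ⟨⟨by omega, by omega⟩, hf3⟩
    · rw [hPEdef, Finset.mem_filter]
      rintro ⟨-, s', hp⟩
      obtain ⟨hp1, hp2, hp3, hp4, hp5, hp6⟩ := hp
      rcases Nat.lt_or_ge s' s with hlt | hge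
      · rcases Nat.lt_or_ge s' (s-1) with hlt' | hge'
        · have := (hp6 (s-1) (Finset.mem_Ioo.2 ⟨hlt', by omega⟩)).2
          exact hsL' this
        · have hs'eq : s' = s - 1 := by omega
          exact hsL' (hTL (s-1) (hs'eq ▸ hp4))
      · exact hf4 s' hge hp2 hp4
  have hinj_aux : ∀ s₁ ∈ St \ H0S, ∀ s₂ ∈ St \ H0S, s₁ < s₂ → f s₁ = f s₂ → False := by
    intro s₁ hs₁ s₂ hs₂ hlt heq
    have hs₁' := hs₁
    rw [Finset.mem_sdiff] at hs₁'
    obtain ⟨hsSt₁, _⟩ := hs₁'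
    rw [hStdef, Finset.mem_filter, Finset.mem_Icc] at hsSt₁
    obtain ⟨⟨h11, h12⟩, h13, h14⟩ := hsSt₁
    have hs₂' := hs₂
    rw [Finset.mem_sdiff] at hs₂'
    obtain ⟨hsSt₂, _⟩ := hs₂'
    rw [hStdef, Finset.mem_filter, Finset.mem_Icc] at hsSt₂
    obtain ⟨⟨h21, h22⟩, h23, h24⟩ := hsSt₂
    obtain ⟨hbe1, hbe2, hbe3, hbe4⟩ := be_spec s₁ h13
    obtain ⟨hf11, hf12, hf13, hf14⟩ := hf_spec s₁ hs₁
    obtain ⟨hf21, hf22, hf23, hf24⟩ := hf_spec s₂ hs₂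
    have : t ∈ L (s₂ - 1) := by
      apply hbe2
      rw [Finset.mem_Icc]
      constructor
      · omega
      · omega
    exact h24 this
  refine Finset.card_bij (fun s _ => f s) hmaps ?_ ?_
  · intro s₁ hs₁ s₂ hs₂ heq
    by_contra hne
    rcases Nat.lt_or_ge s₁ s₂ with h | h
    · exact hinj_aux s₁ hs₁ s₂ hs₂ h heq
    · exact hinj_aux s₂ hs₂ s₁ hs₁ (by omega) heq.symm
  · -- surjectivity
    intro i hi
    rw [Finset.mem_sdiff] at hi
    obtain ⟨hiK, hiPE⟩ := hi
    rw [hKdef, Finset.mem_filter, Finset.mem_Icc] at hiK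
    obtain ⟨⟨hi1, hin⟩, hiT⟩ := hiK
    have hiL : t ∈ L i := hTL i hiT
    -- block start of i
    set b := sInf {s | ∀ j ∈ Finset.Icc s i, t ∈ L j} with hbdef
    have hbne : {s | ∀ j ∈ Finset.Icc s i, t ∈ L j}.Nonempty := by
      refine ⟨i, ?_⟩
      intro j hj
      have : j = i := by simpa [Finset.mem_Icc, le_antisymm_iff] using hj
      simpa [this] using hiL
    have hbmem := Nat.sInf_mem hbne
    have hbi : b ≤ i := Nat.sInf_le (by
      intro j hj
      have : j = i := by simpa [Finset.mem_Icc, le_antisymm_iff] using hj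
      simpa [this] using hiL)
    have hb1 : 1 ≤ b := by
      rcases Nat.eq_zero_or_pos b with h0 | h; swap
      · exact h
      · exfalso
        have h00 : (0:ℕ) ∈ {s | ∀ j ∈ Finset.Icc s i, t ∈ L j} := by
          rw [← h0]; exact hbmem
        have ht0 : t ∈ L 0 := h00 0 (Finset.mem_Icc.2 ⟨le_refl 0, Nat.zero_le i⟩)
        have hL0 : L 0 = ∅ := hLout 0 (by simp [Finset.mem_Icc])
        simp [hL0] at ht0
    have hbL : t ∈ L b := hbmem b (Finset.mem_Icc.2 ⟨le_refl b, hbi⟩)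
    have hbL' : t ∉ L (b - 1) := by
      intro hc
      have hmem' : (b-1) ∈ {s | ∀ j ∈ Finset.Icc s i, t ∈ L j} := by
        intro j hj
        rw [Finset.mem_Icc] at hj
        rcases Nat.lt_or_ge j b with h' | h'
        · have : j = b - 1 := by omega
          simpa [this] using hc
        · exact hbmem j (Finset.mem_Icc.2 ⟨h', hj.2⟩)
      have := Nat.sInf_le hmem'
      omega
    have hbSt : b ∈ St := by
      rw [hStdef, Finset.mem_filter, Finset.mem_Icc]
      exact ⟨⟨hb1, by omega⟩, hbL, hbL'⟩
    have hbH0 : b ∉ H0S := by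
      rw [hH0def, Finset.mem_filter]
      rintro ⟨-, e, h0⟩
      obtain ⟨h01, h02, h03, h04, h05, h06⟩ := h0
      rcases Nat.lt_or_ge e i with hei | hei
      · have hnL : t ∉ L (e + 1) := by
          rcases h06 with h' | h'
          · exact h'
          · omega
        apply hnL
        exact hbmem (e+1) (Finset.mem_Icc.2 ⟨by omega, by omega⟩)
      · exact (h04 i (Finset.mem_Icc.2 ⟨hbi, hei⟩)).1 hiT
    have hbmemSd : b ∈ St \ H0S := Finset.mem_sdiff.2 ⟨hbSt, hbH0⟩
    refine ⟨b, hbmemSd, ?_⟩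
    -- f b = i
    obtain ⟨hfb1, hfb2, hfb3, hfb4⟩ := hf_spec b hbmemSd
    have hfble : f b ≤ i := Nat.sInf_le ⟨hbi, hiT⟩
    rcases eq_or_lt_of_le hfble with heq | hflt
    · exact heq
    · exfalso
      -- build a pipe ending at i
      set j₀ := Nat.findGreatest (fun j => b ≤ j ∧ t ∈ T j) (i-1) with hj₀def
      have hpfb : b ≤ f b ∧ t ∈ T (f b) := ⟨hfb1, hfb3⟩
      have hfbi1 : f b ≤ i - 1 := by omega
      have hj₀ge : f b ≤ j₀ :=
        Nat.le_findGreatest (P := fun j => b ≤ j ∧ t ∈ T j) hfbi1 hpfb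
      have hj₀spec : b ≤ j₀ ∧ t ∈ T j₀ :=
        Nat.findGreatest_spec (P := fun j => b ≤ j ∧ t ∈ T j) hfbi1 hpfb
      have hj₀le : j₀ ≤ i - 1 := Nat.findGreatest_le (i-1)
      have hpipe : IsPipe n T L j₀ i t := by
        refine ⟨by omega, by omega, hin, hj₀spec.2, hiT, ?_⟩
        intro m hm
        rw [Finset.mem_Ioo] at hm
        constructor
        · intro hTm
          have := Nat.findGreatest_is_greatest (P := fun j => b ≤ j ∧ t ∈ T j)
            (show j₀ < m by omega) (show m ≤ i - 1 by omega)
          exact this ⟨by omega, hTm⟩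
        · exact hbmem m (Finset.mem_Icc.2 ⟨by omega, by omega⟩)
      apply hiPE
      rw [hPEdef, Finset.mem_filter, Finset.mem_Icc]
      exact ⟨⟨by omega, hin⟩, j₀, hpipe⟩


/-- Key identity in the proof of Theorem 1: for a full-magazine sequence,
`switches(L) = ∑ |T i| − C − |P(L)| + |H₀(L)|`. -/
theorem switches_eq_pipes_h0 (n C : ℕ) (T L : ℕ → Finset ℕ) (hn : 1 ≤ n)
    (hfeas : ∀ i ∈ Finset.Icc 1 n, T i ⊆ L i ∧ (L i).card = C)
    (hout : ∀ i, i ∉ Finset.Icc 1 n → T i = ∅ ∧ L i = ∅) :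
    (switches n L : ℤ)
      = (∑ i ∈ Finset.Icc 1 n, ((T i).card : ℤ)) - C
        - (pipeSet n T L).card + (h0Set n T L).card := by
  classical
  have hTL : ∀ i, T i ⊆ L i := by
    intro i
    by_cases h : i ∈ Finset.Icc 1 n
    · exact (hfeas i h).1
    · rw [(hout i h).1]; exact Finset.empty_subset _
  have hLout : ∀ i, i ∉ Finset.Icc 1 n → L i = ∅ := fun i h => (hout i h).2
  have hL0 : L 0 = ∅ := hLout 0 (by simp)
  set U := (Finset.Icc 1 n).biUnion L with hUdef
  have hLU : ∀ i ∈ Finset.Icc 1 n, L i ⊆ U := fun i hi => Finset.subset_biUnion_of_mem L hi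
  have hsw : switches n L
      = ∑ t ∈ U, ((Finset.Icc 1 (n-1)).filter (fun i => t ∈ L (i+1) ∧ t ∉ L i)).card := by
    calc switches n L
        = ∑ i ∈ Finset.Icc 1 (n-1), (U.filter (fun t => t ∈ L (i+1) ∧ t ∉ L i)).card := by
          unfold switches
          refine Finset.sum_congr rfl fun i hi => ?_
          congr 1
          ext a
          simp only [Finset.mem_sdiff, Finset.mem_filter]
          constructor
          · intro h
            refine ⟨?_, h⟩
            refine hLU (i+1) ?_ h.1
            rw [Finset.mem_Icc] at hi ⊢
            omega
          · exact fun h => h.2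
      _ = ∑ i ∈ Finset.Icc 1 (n-1), ∑ t ∈ U, (if t ∈ L (i+1) ∧ t ∉ L i then 1 else 0) :=
          Finset.sum_congr rfl fun i _ => Finset.card_filter _ _
      _ = ∑ t ∈ U, ∑ i ∈ Finset.Icc 1 (n-1), (if t ∈ L (i+1) ∧ t ∉ L i then 1 else 0) :=
          Finset.sum_comm
      _ = _ := Finset.sum_congr rfl fun t _ => (Finset.card_filter _ _).symm
  have hTsum : ∑ i ∈ Finset.Icc 1 n, (T i).card
      = ∑ t ∈ U, ((Finset.Icc 1 n).filter (fun i => t ∈ T i)).card := by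
    calc ∑ i ∈ Finset.Icc 1 n, (T i).card
        = ∑ i ∈ Finset.Icc 1 n, (U.filter (fun t => t ∈ T i)).card := by
          refine Finset.sum_congr rfl fun i hi => ?_
          congr 1
          ext a
          simp only [Finset.mem_filter]
          exact ⟨fun h => ⟨hLU i hi (hTL i h), h⟩, fun h => h.2⟩
      _ = ∑ i ∈ Finset.Icc 1 n, ∑ t ∈ U, (if t ∈ T i then 1 else 0) :=
          Finset.sum_congr rfl fun i _ => Finset.card_filter _ _
      _ = ∑ t ∈ U, ∑ i ∈ Finset.Icc 1 n, (if t ∈ T i then 1 else 0) := Finset.sum_comm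
      _ = _ := Finset.sum_congr rfl fun t _ => (Finset.card_filter _ _).symm
  have hC : ∑ t ∈ U, (if t ∈ L 1 then 1 else 0) = C := by
    have h1 : (1 : ℕ) ∈ Finset.Icc 1 n := Finset.mem_Icc.2 ⟨le_refl 1, hn⟩
    have heq : U.filter (fun t => t ∈ L 1) = L 1 := by
      ext a
      simp only [Finset.mem_filter]
      exact ⟨fun h => h.2, fun h => ⟨hLU 1 h1 h, h⟩⟩
    rw [← Finset.card_filter, heq]
    exact (hfeas 1 h1).2
  have hfibP : ∀ p ∈ pipeSet n T L, p.2 ∈ U := by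
    intro p hp
    simp only [pipeSet, Finset.mem_filter] at hp
    obtain ⟨-, hpipe⟩ := hp
    exact Finset.mem_biUnion.2 ⟨p.1.1, Finset.mem_Icc.2 ⟨hpipe.1, by
      have h2 := hpipe.2.1; have h3 := hpipe.2.2.1; omega⟩, hTL _ hpipe.2.2.2.1⟩
  have hfibH : ∀ p ∈ h0Set n T L, p.2 ∈ U := by
    intro p hp
    simp only [h0Set, Finset.mem_filter] at hp
    obtain ⟨-, h0⟩ := hp
    have h2 := h0.2.1
    have htL : p.2 ∈ L p.1.1 := (h0.2.2.2.1 p.1.1 (Finset.mem_Icc.2 ⟨le_refl _, h2⟩)).2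
    exact Finset.mem_biUnion.2 ⟨p.1.1, Finset.mem_Icc.2 ⟨h0.1, by
      have h3 := h0.2.2.1; omega⟩, htL⟩
  have hpipes : (pipeSet n T L).card
      = ∑ t ∈ U, ((Finset.Icc 1 n).filter (fun e => ∃ s, IsPipe n T L s e t)).card := by
    rw [Finset.card_eq_sum_card_fiberwise hfibP]
    exact Finset.sum_congr rfl fun t _ => pipe_fiber_card n T L t
  have hh0s : (h0Set n T L).card
      = ∑ t ∈ U, ((Finset.Icc 1 n).filter (fun s => ∃ e, IsH0 n T L s e t)).card := by
    rw [Finset.card_eq_sum_card_fiberwise hfibH]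
    exact Finset.sum_congr rfl fun t _ => h0_fiber_card n T L t
  have hstarts : ∀ t ∈ U,
      ((Finset.Icc 1 n).filter (fun s => t ∈ L s ∧ t ∉ L (s-1))).card
      = ((Finset.Icc 1 (n-1)).filter (fun i => t ∈ L (i+1) ∧ t ∉ L i)).card
        + (if t ∈ L 1 then 1 else 0) := fun t _ => starts_card n L t hn hL0
  have hsum1 : ∑ t ∈ U, ((Finset.Icc 1 n).filter (fun s => t ∈ L s ∧ t ∉ L (s-1))).card
      = switches n L + C := by
    rw [Finset.sum_congr rfl hstarts, Finset.sum_add_distrib, hC, ← hsw]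
  have hsum2 : (∑ t ∈ U, ((Finset.Icc 1 n).filter (fun s => t ∈ L s ∧ t ∉ L (s-1))).card)
      + (pipeSet n T L).card
      = (∑ i ∈ Finset.Icc 1 n, (T i).card) + (h0Set n T L).card := by
    rw [hpipes, hTsum, hh0s, ← Finset.sum_add_distrib, ← Finset.sum_add_distrib]
    exact Finset.sum_congr rfl fun t _ => core_count n T L t hTL hLout
  have key : switches n L + C + (pipeSet n T L).card
      = (∑ i ∈ Finset.Icc 1 n, (T i).card) + (h0Set n T L).card := by
    omega
  have keyZ := congrArg (fun x : ℕ => (x : ℤ)) key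
  push_cast at keyZ ⊢
  linarith
end

section
/- Theorem 1 (TLP objective via pipes): Let C < m be the magazine capacity, T_1,…,T_n ⊆ T the job tool sets with |T_i| ≤ C, |∪T_i| = m, and let M = {(M_1,…,M_n) : T_i ⊆ M_i, |M_i| = C}. Then min{switches(M) : M ∈ M} = Σ_{i=1}^n |T_i| − C − max{|P(M)| : M ∈ M}, where switches(M) = Σ_{i=1}^{n-1}|M_{i+1} \ M_i| and P(M) is the set of pipes of M. -/
/-- A feasible full-magazine sequence: `T i ⊆ M i`, `|M i| = C`, tools come from the
overall tool set `⋃ T i`. -/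
def Feasible (C n : ℕ) (T M : ℕ → Finset ℕ) : Prop :=
  ∀ i ∈ Finset.Icc 1 n, T i ⊆ M i ∧ (M i).card = C ∧ M i ⊆ (Finset.Icc 1 n).biUnion T

open Finset

section Runs

variable {p : ℕ → Prop}

lemma exists_run_end {j n : ℕ} (hjn : j ≤ n) (hj : p j) :
    ∃ k, j ≤ k ∧ k ≤ n ∧ (∀ a ∈ Icc j k, p a) ∧ (k = n ∨ ¬ p (k + 1)) := by
  induction hd : n - j generalizing j with
  | zero => exact ⟨j, le_rfl, hjn, fun a ha => by rwa [show a = j by grind], by omega⟩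
  | succ d ih =>
    by_cases hnext : p (j + 1)
    · obtain ⟨k, hjk, hkn, hrun, hend⟩ := ih (by omega) hnext (by omega)
      refine ⟨k, by omega, hkn, fun a ha => ?_, hend⟩
      rcases (mem_Icc.1 ha).1.eq_or_lt with rfl | hlt
      · exact hj
      · exact hrun a (mem_Icc.2 ⟨hlt, (mem_Icc.1 ha).2⟩)
    · exact ⟨j, le_rfl, hjn, fun a ha => by rwa [show a = j by grind], Or.inr hnext⟩

lemma exists_run_start {lo k : ℕ} (hlo : lo ≤ k) (hk : p k) :
    ∃ j, lo ≤ j ∧ j ≤ k ∧ (∀ a ∈ Icc j k, p a) ∧ (j = lo ∨ ¬ p (j - 1)) := by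
  induction hd : k - lo generalizing k with
  | zero => exact ⟨k, hlo, le_rfl, fun a ha => by rwa [show a = k by grind], by omega⟩
  | succ d ih =>
    by_cases hprev : p (k - 1)
    · obtain ⟨j, hlo, hjk, hrun, hstart⟩ := ih (by omega) hprev (by omega)
      refine ⟨j, hlo, by omega, fun a ha => ?_, hstart⟩
      rcases (mem_Icc.1 ha).2.eq_or_lt with rfl | hlt
      · exact hk
      · exact hrun a (mem_Icc.2 ⟨(mem_Icc.1 ha).1, by omega⟩)
    · exact ⟨k, hlo, le_rfl, fun a ha => by rwa [show a = k by grind], Or.inr hprev⟩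

end Runs

section FinsetLemmas

variable {α : Type*} [DecidableEq α] {A B : Finset α} {t u : α}

lemma insert_erase_sdiff_insert_erase (htA : t ∈ A) (huB : u ∉ B) :
    insert u (B.erase t) \ insert u (A.erase t) = B \ A := by
  ext x
  grind

lemma insert_erase_sdiff_of_mem (huA : u ∈ A) : insert u (B.erase t) \ A = (B \ A).erase t := by
  ext x
  grind

lemma sdiff_insert_erase_of_notMem (htB : t ∉ B) : B \ insert u (A.erase t) = (B \ A).erase u := by
  ext x
  grind

lemma card_sdiff_insert_erase_le (huA : u ∉ A) (h : u ∈ B ∨ t ∉ B) :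
    (B \ insert u (A.erase t)).card ≤ (B \ A).card := by
  rcases h with huB | htB
  · have hsub : B \ insert u (A.erase t) ⊆ insert t ((B \ A).erase u) := by
      intro x
      grind
    calc (B \ insert u (A.erase t)).card ≤ ((B \ A).erase u).card + 1 :=
          (card_le_card hsub).trans (card_insert_le _ _)
      _ = (B \ A).card := card_erase_add_one (mem_sdiff.2 ⟨huB, huA⟩)
  · rw [sdiff_insert_erase_of_notMem htB]
    exact card_erase_le

lemma exists_mem_sdiff_of_card_eq (hAB : A.card = B.card) (htB : t ∈ B) (htA : t ∉ A) :
    ∃ u ∈ A, u ∉ B := by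
  obtain ⟨u, hu⟩ := card_pos.1 <|
    card_sdiff_comm hAB ▸ card_pos.2 ⟨t, mem_sdiff.2 ⟨htB, htA⟩⟩
  exact ⟨u, (mem_sdiff.1 hu).1, (mem_sdiff.1 hu).2⟩

end FinsetLemmas

section Counting

variable {n C : ℕ} {T M : ℕ → Finset ℕ} {s e t : ℕ}

def IsRun (n : ℕ) (M : ℕ → Finset ℕ) (t j k : ℕ) : Prop :=
  1 ≤ j ∧ j ≤ k ∧ k ≤ n ∧ (∀ a ∈ Icc j k, t ∈ M a) ∧
    (j = 1 ∨ t ∉ M (j - 1)) ∧ (k = n ∨ t ∉ M (k + 1))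

def NoIdleRun (n : ℕ) (T M : ℕ → Finset ℕ) : Prop :=
  ∀ t j k, IsRun n M t j k → ∃ a ∈ Icc j k, t ∈ T a

def occurrences (n : ℕ) (T : ℕ → Finset ℕ) : Finset (Σ _ : ℕ, ℕ) :=
  (Icc 1 n).sigma T

def runStarts (n : ℕ) (M : ℕ → Finset ℕ) : Finset (Σ _ : ℕ, ℕ) :=
  (Icc 1 n).sigma fun j => (M j).filter fun t => j = 1 ∨ t ∉ M (j - 1)

def runStart (M : ℕ → Finset ℕ) (t i : ℕ) : ℕ :=
  Nat.findGreatest (fun j => j = 1 ∨ t ∉ M (j - 1)) i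

def IsPipeEnd (n : ℕ) (T M : ℕ → Finset ℕ) (x : Σ _ : ℕ, ℕ) : Prop :=
  ∃ s, IsPipe n T M s x.1 x.2

lemma mem_pipeSet_s7 {x : (ℕ × ℕ) × ℕ} : x ∈ pipeSet n T M ↔ IsPipe n T M x.1.1 x.1.2 x.2 := by
  simp only [pipeSet, mem_filter, mem_product, mem_Icc, mem_biUnion, and_iff_right_iff_imp]
  rintro ⟨hs, hse, hen, -, hte, -⟩
  exact ⟨⟨⟨hs, by omega⟩, by omega, hen⟩, x.1.2, ⟨by omega, hen⟩, hte⟩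

lemma IsPipe.start_unique {s' : ℕ} (h : IsPipe n T M s e t) (h' : IsPipe n T M s' e t) :
    s = s' := by
  by_contra hne
  rcases Nat.lt_or_gt_of_ne hne with hlt | hlt
  · exact (h.2.2.2.2.2 s' (mem_Ioo.2 ⟨hlt, h'.2.1⟩)).1 h'.2.2.2.1
  · exact (h'.2.2.2.2.2 s (mem_Ioo.2 ⟨hlt, h.2.1⟩)).1 h.2.2.2.1

lemma IsPipe.mem_of_mem_Icc (hT : ∀ i ∈ Icc 1 n, T i ⊆ M i) (h : IsPipe n T M s e t)
    {i : ℕ} (hi : i ∈ Icc s e) : t ∈ M i := by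
  obtain ⟨hs, hse, hen, hts, hte, hmid⟩ := h
  rcases (mem_Icc.1 hi).1.eq_or_lt with rfl | hsi
  · exact hT s (mem_Icc.2 ⟨hs, by omega⟩) hts
  rcases (mem_Icc.1 hi).2.eq_or_lt with rfl | hie
  · exact hT i (mem_Icc.2 ⟨by omega, hen⟩) hte
  · exact (hmid i (mem_Ioo.2 ⟨hsi, hie⟩)).2

lemma isPipeEnd_of_mem {e₁ e₂ : ℕ} (he₁ : 1 ≤ e₁) (hlt : e₁ < e₂) (he₂ : e₂ ≤ n)
    (h₁ : t ∈ T e₁) (h₂ : t ∈ T e₂) (hM : ∀ i ∈ Ioo e₁ e₂, t ∈ M i) :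
    IsPipeEnd n T M ⟨e₂, t⟩ := by
  -- the pipe starts at the last occurrence of `t` before `e₂`
  set s := Nat.findGreatest (t ∈ T ·) (e₂ - 1)
  have hs : e₁ ≤ s := Nat.le_findGreatest (by omega) h₁
  have hts : t ∈ T s := Nat.findGreatest_spec (P := (t ∈ T ·)) (by omega) h₁
  have hse : s < e₂ := (Nat.findGreatest_le _).trans_lt (by omega)
  refine ⟨s, by omega, hse, he₂, hts, h₂, fun i hi => ⟨fun hti => ?_, ?_⟩⟩
  · exact Nat.findGreatest_is_greatest (mem_Ioo.1 hi).1 (by grind) hti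
  · exact hM i (mem_Ioo.2 ⟨hs.trans_lt (mem_Ioo.1 hi).1, (mem_Ioo.1 hi).2⟩)

lemma card_occurrences : (occurrences n T).card = ∑ i ∈ Icc 1 n, (T i).card :=
  card_sigma _ _

lemma card_runStarts (hn : 1 ≤ n) : (runStarts n M).card = (M 1).card + switches n M := by
  obtain ⟨m, rfl⟩ := Nat.exists_eq_add_of_le' hn
  rw [runStarts, card_sigma, switches, Nat.add_sub_cancel]
  induction m with
  | zero => simp
  | succ m ih =>
    rw [sum_Icc_succ_top (by omega), ih (by omega), sum_Icc_succ_top (by omega), add_assoc,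
      sdiff_eq_filter]
    simp

lemma one_le_runStart {i : ℕ} (hi : 1 ≤ i) : 1 ≤ runStart M t i :=
  Nat.le_findGreatest hi (Or.inl rfl)

lemma runStart_le (i : ℕ) : runStart M t i ≤ i :=
  Nat.findGreatest_le i

lemma runStart_isStart {i : ℕ} (hi : 1 ≤ i) :
    runStart M t i = 1 ∨ t ∉ M (runStart M t i - 1) :=
  Nat.findGreatest_spec (P := fun j => j = 1 ∨ t ∉ M (j - 1)) hi (Or.inl rfl)

lemma mem_of_runStart_le {i a : ℕ} (ht : t ∈ M i) (ha : runStart M t i ≤ a) (hai : a ≤ i) :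
    t ∈ M a := by
  induction hai using Nat.decreasingInduction with
  | self => exact ht
  | of_succ a hai ih =>
    have hnot := Nat.findGreatest_is_greatest (P := fun j => j = 1 ∨ t ∉ M (j - 1))
      (Nat.lt_succ_of_le ha) hai
    simp only [not_or, not_not] at hnot
    exact hnot.2

lemma runStart_eq {i j : ℕ} (hj : 1 ≤ j) (hji : j ≤ i) (hstart : j = 1 ∨ t ∉ M (j - 1))
    (hrun : ∀ a ∈ Icc j i, t ∈ M a) : runStart M t i = j := by
  refine Nat.findGreatest_eq_iff.2 ⟨hji, fun _ => hstart, fun m hjm hmi hm => ?_⟩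
  rcases hm with rfl | hm
  · omega
  · exact hm (hrun (m - 1) (mem_Icc.2 ⟨by omega, by omega⟩))

lemma runStart_mem_runStarts {i : ℕ} (hi : i ∈ Icc 1 n) (ht : t ∈ M i) :
    ⟨runStart M t i, t⟩ ∈ runStarts n M := by
  have hi := mem_Icc.1 hi
  have hstart := one_le_runStart (M := M) (t := t) hi.1
  simp only [runStarts, mem_sigma, mem_Icc, mem_filter]
  exact ⟨⟨hstart, (runStart_le i).trans hi.2⟩, mem_of_runStart_le ht le_rfl (runStart_le i),
    runStart_isStart hi.1⟩

open Classical in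
lemma card_pipeSet : (pipeSet n T M).card = ((occurrences n T).filter (IsPipeEnd n T M)).card := by
  refine card_bij (fun x _ => ⟨x.1.2, x.2⟩) (fun x hx => ?_) (fun x hx y hy hxy => ?_) ?_
  · have hp := mem_pipeSet_s7.1 hx
    simp only [mem_filter, occurrences, mem_sigma, mem_Icc]
    exact ⟨⟨⟨by grind [IsPipe], hp.2.2.1⟩, hp.2.2.2.2.1⟩, x.1.1, hp⟩
  · simp only [Sigma.mk.injEq, heq_eq_eq] at hxy
    have hp := mem_pipeSet_s7.1 hx
    rw [hxy.1, hxy.2] at hp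
    have hs := hp.start_unique (mem_pipeSet_s7.1 hy)
    ext <;> simp [hs, hxy.1, hxy.2]
  · rintro ⟨e, t⟩ hx
    obtain ⟨s, hp⟩ := (mem_filter.1 hx).2
    exact ⟨((s, e), t), mem_pipeSet_s7.2 hp, rfl⟩

open Classical in
lemma card_occurrences_eq :
    (occurrences n T).card
      = (pipeSet n T M).card + ((occurrences n T).filter (¬ IsPipeEnd n T M ·)).card := by
  rw [card_pipeSet, card_filter_add_card_filter_not]

open Classical in
lemma card_filter_not_isPipeEnd_le (hT : ∀ i ∈ Icc 1 n, T i ⊆ M i) :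
    ((occurrences n T).filter (¬ IsPipeEnd n T M ·)).card ≤ (runStarts n M).card := by
  -- of two occurrences of `t` in the same run, the later one ends a pipe
  have hsameRun : ∀ x ∈ occurrences n T, ∀ y ∈ occurrences n T, x.2 = y.2 → x.1 < y.1 →
      runStart M x.2 x.1 = runStart M y.2 y.1 → IsPipeEnd n T M y := by
    rintro ⟨i, t⟩ hx ⟨i', t'⟩ hy rfl (hlt : i < i') hst
    simp only [occurrences, mem_sigma, mem_Icc] at hx hy hst
    refine isPipeEnd_of_mem hx.1.1 hlt hy.1.2 hx.2 hy.2 fun a ha => ?_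
    exact mem_of_runStart_le (hT i' (mem_Icc.2 hy.1) hy.2)
      (hst ▸ (runStart_le i).trans (mem_Ioo.1 ha).1.le) (mem_Ioo.1 ha).2.le
  refine card_le_card_of_injOn (fun x => ⟨runStart M x.2 x.1, x.2⟩) (fun x hx => ?_) ?_
  · have hx := mem_sigma.1 (mem_filter.1 hx).1
    exact runStart_mem_runStarts hx.1 (hT _ hx.1 hx.2)
  · intro x hx y hy hxy
    simp only [coe_filter, Set.mem_ofPred_eq, Sigma.mk.injEq, heq_eq_eq] at hx hy hxy
    rcases lt_trichotomy x.1 y.1 with hlt | heq | hlt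
    · exact absurd (hsameRun x hx.1 y hy.1 hxy.2 hlt hxy.1) hy.2
    · exact Sigma.ext heq (heq_of_eq hxy.2)
    · exact absurd (hsameRun y hy.1 x hx.1 hxy.2.symm hlt hxy.1.symm) hx.2

open Classical in
lemma card_runStarts_le (hT : ∀ i ∈ Icc 1 n, T i ⊆ M i) (hM : NoIdleRun n T M) :
    (runStarts n M).card ≤ ((occurrences n T).filter (¬ IsPipeEnd n T M ·)).card := by
  -- a run is the image of its first occurrence
  refine card_le_card_of_surjOn (fun x => ⟨runStart M x.2 x.1, x.2⟩) ?_
  rintro ⟨j, t⟩ hx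
  simp only [runStarts, coe_sigma, Set.mem_sigma_iff, mem_coe, mem_Icc, mem_filter] at hx
  obtain ⟨⟨hj, hjn⟩, htj, hstart⟩ := hx
  obtain ⟨k, hjk, hkn, hrun, hend⟩ := exists_run_end (p := (t ∈ M ·)) hjn htj
  have hocc : ∃ a, j ≤ a ∧ a ≤ k ∧ t ∈ T a := by
    obtain ⟨a, ha, hta⟩ := hM t j k ⟨hj, hjk, hkn, hrun, hstart, hend⟩
    exact ⟨a, (mem_Icc.1 ha).1, (mem_Icc.1 ha).2, hta⟩
  obtain ⟨hja, hak, hta⟩ := Nat.find_spec hocc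
  refine ⟨⟨Nat.find hocc, t⟩, ?_, ?_⟩
  · simp only [coe_filter, Set.mem_ofPred_eq, occurrences, mem_sigma, mem_Icc]
    refine ⟨⟨⟨by omega, by omega⟩, hta⟩, ?_⟩
    rintro ⟨s, hp⟩
    replace hp : IsPipe n T M s (Nat.find hocc) t := hp
    have hsa : s < Nat.find hocc := hp.2.1
    have hsj : s < j := by
      by_contra hjs
      exact Nat.find_min hocc hsa ⟨by omega, by omega, hp.2.2.2.1⟩
    rcases hstart with rfl | hout
    · exact absurd hp.1 (by omega)
    · exact hout (hp.mem_of_mem_Icc hT (mem_Icc.2 ⟨by omega, by omega⟩))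
  · simp only [Sigma.mk.injEq, heq_eq_eq, and_true]
    exact runStart_eq hj hja hstart fun a ha => hrun a (mem_Icc.2 ⟨(mem_Icc.1 ha).1, by grind⟩)

lemma Feasible.card_runStarts (hn : 1 ≤ n) (hF : Feasible C n T M) :
    (runStarts n M).card = C + switches n M := by
  rw [_root_.card_runStarts hn, (hF 1 (mem_Icc.2 ⟨le_rfl, hn⟩)).2.1]

lemma Feasible.sum_card_le (hn : 1 ≤ n) (hF : Feasible C n T M) :
    ∑ i ∈ Icc 1 n, (T i).card ≤ (pipeSet n T M).card + C + switches n M := by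
  rw [← card_occurrences, card_occurrences_eq (M := M), add_assoc, ← hF.card_runStarts hn]
  exact Nat.add_le_add_left (card_filter_not_isPipeEnd_le fun i hi => (hF i hi).1) _

lemma Feasible.sum_card_eq (hn : 1 ≤ n) (hF : Feasible C n T M) (hM : NoIdleRun n T M) :
    ∑ i ∈ Icc 1 n, (T i).card = (pipeSet n T M).card + C + switches n M := by
  refine (hF.sum_card_le hn).antisymm ?_
  rw [← card_occurrences, card_occurrences_eq (M := M), add_assoc, ← hF.card_runStarts hn]
  exact Nat.add_le_add_left (card_runStarts_le (fun i hi => (hF i hi).1) hM) _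

end Counting

section Replace

variable {n C : ℕ} {T M : ℕ → Finset ℕ} {t u j k : ℕ}

def replaceOn (M : ℕ → Finset ℕ) (t u j k : ℕ) (a : ℕ) : Finset ℕ :=
  if j ≤ a ∧ a ≤ k then insert u ((M a).erase t) else M a

lemma replaceOn_of_mem {a : ℕ} (hja : j ≤ a) (hak : a ≤ k) :
    replaceOn M t u j k a = insert u ((M a).erase t) :=
  if_pos ⟨hja, hak⟩

lemma replaceOn_of_notMem {a : ℕ} (ha : a < j ∨ k < a) : replaceOn M t u j k a = M a :=
  if_neg (by omega)

lemma card_replaceOn_sdiff_le (hjk : j ≤ k)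
    (hrun : ∀ a ∈ Icc j k, t ∈ M a ∧ u ∉ M a)
    (hleft : 2 ≤ j → u ∈ M (j - 1)) (hright : k < n → u ∈ M (k + 1) ∨ t ∉ M (k + 1))
    {i : ℕ} (hi : i ∈ Icc 1 (n - 1)) :
    (replaceOn M t u j k (i + 1) \ replaceOn M t u j k i).card ≤ (M (i + 1) \ M i).card := by
  have hi := mem_Icc.1 hi
  by_cases hout : i + 1 < j ∨ k < i
  · rw [replaceOn_of_notMem (by omega), replaceOn_of_notMem (by omega)]
  by_cases hin : j ≤ i ∧ i + 1 ≤ k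
  · rw [replaceOn_of_mem (by omega) hin.2, replaceOn_of_mem hin.1 (by omega),
      insert_erase_sdiff_insert_erase (hrun i (mem_Icc.2 ⟨hin.1, by omega⟩)).1
        (hrun (i + 1) (mem_Icc.2 ⟨by omega, hin.2⟩)).2]
  by_cases hij : i + 1 = j
  · rw [replaceOn_of_mem (by omega) (by omega), replaceOn_of_notMem (by omega),
      insert_erase_sdiff_of_mem (by simpa [← hij] using hleft (by omega))]
    exact card_erase_le
  · have hik : i = k := by omega
    subst hik
    rw [replaceOn_of_notMem (by omega), replaceOn_of_mem (by omega) le_rfl]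
    exact card_sdiff_insert_erase_le (hrun i (mem_Icc.2 ⟨by omega, le_rfl⟩)).2 (hright (by omega))

lemma switches_replaceOn_lt (hj : 1 ≤ j) (hjk : j ≤ k) (hkn : k ≤ n)
    (hrun : ∀ a ∈ Icc j k, t ∈ M a ∧ u ∉ M a)
    (hleft : 2 ≤ j → u ∈ M (j - 1)) (hright : k < n → u ∈ M (k + 1) ∨ t ∉ M (k + 1))
    (hstrict : (2 ≤ j ∧ t ∉ M (j - 1)) ∨ (k < n ∧ u ∈ M (k + 1) ∧ t ∉ M (k + 1))) :
    switches n (replaceOn M t u j k) < switches n M := by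
  refine sum_lt_sum (fun i hi => card_replaceOn_sdiff_le hjk hrun hleft hright hi) ?_
  rcases hstrict with ⟨hj2, htj⟩ | ⟨hkn, huk, htk⟩
  · refine ⟨j - 1, mem_Icc.2 ⟨by omega, by omega⟩, ?_⟩
    rw [Nat.sub_add_cancel (by omega), replaceOn_of_mem le_rfl hjk,
      replaceOn_of_notMem (by omega), insert_erase_sdiff_of_mem (hleft hj2)]
    exact card_erase_lt_of_mem (mem_sdiff.2 ⟨(hrun j (mem_Icc.2 ⟨le_rfl, hjk⟩)).1, htj⟩)
  · refine ⟨k, mem_Icc.2 ⟨by omega, by omega⟩, ?_⟩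
    rw [replaceOn_of_notMem (by omega), replaceOn_of_mem hjk le_rfl,
      sdiff_insert_erase_of_notMem htk]
    exact card_erase_lt_of_mem (mem_sdiff.2 ⟨huk, (hrun k (mem_Icc.2 ⟨hjk, le_rfl⟩)).2⟩)

lemma Feasible.replaceOn (hF : Feasible C n T M) (hu : u ∈ (Icc 1 n).biUnion T)
    (hrun : ∀ a ∈ Icc j k, t ∈ M a ∧ u ∉ M a ∧ t ∉ T a) :
    Feasible C n T (replaceOn M t u j k) := by
  intro i hi
  obtain ⟨hT, hcard, hsub⟩ := hF i hi
  by_cases hin : j ≤ i ∧ i ≤ k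
  · obtain ⟨ht, hu', htT⟩ := hrun i (mem_Icc.2 hin)
    rw [replaceOn_of_mem hin.1 hin.2]
    refine ⟨fun x hx => mem_insert_of_mem (mem_erase.2 ⟨?_, hT hx⟩), ?_, ?_⟩
    · rintro rfl
      exact htT hx
    · rw [card_insert_of_notMem fun h => hu' (mem_of_mem_erase h), card_erase_of_mem ht, hcard]
      have : 0 < C := hcard ▸ card_pos.2 ⟨t, ht⟩
      omega
    · exact insert_subset hu ((erase_subset _ _).trans hsub)
  · rw [replaceOn_of_notMem (by omega)]
    exact ⟨hT, hcard, hsub⟩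

lemma pipeSet_subset_replaceOn
    (hfree : ∀ s e, IsPipe n T M s e t → ∀ i ∈ Ioo s e, i < j ∨ k < i) :
    pipeSet n T M ⊆ pipeSet n T (replaceOn M t u j k) := by
  intro x hx
  obtain ⟨hs, hse, hen, hts, hte, hmid⟩ := mem_pipeSet_s7.1 hx
  refine mem_pipeSet_s7.2 ⟨hs, hse, hen, hts, hte, fun i hi => ⟨(hmid i hi).1, ?_⟩⟩
  by_cases hin : j ≤ i ∧ i ≤ k
  · rw [replaceOn_of_mem hin.1 hin.2]
    have hxt : x.2 ≠ t := by
      rintro h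
      have := hfree _ _ (h ▸ mem_pipeSet_s7.1 hx) i hi
      omega
    exact mem_insert_of_mem (mem_erase.2 ⟨hxt, (hmid i hi).2⟩)
  · rw [replaceOn_of_notMem (by omega)]
    exact (hmid i hi).2

end Replace

section IdleRuns

variable {n C : ℕ} {T M : ℕ → Finset ℕ} {t j k : ℕ}

lemma IsRun.notMem_Ioo_of_isPipe (hT : ∀ i ∈ Icc 1 n, T i ⊆ M i) (hrun : IsRun n M t j k)
    (hidle : ∀ a ∈ Icc j k, t ∉ T a) {s e : ℕ} (hp : IsPipe n T M s e t) {i : ℕ}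
    (hi : i ∈ Ioo s e) : i < j ∨ k < i := by
  -- a pipe through the run would have to start before it, so `t` would be loaded before `j`
  by_contra hin
  have hsj : s < j := by
    by_contra hjs
    exact hidle s (mem_Icc.2 ⟨by omega, by grind⟩) hp.2.2.2.1
  rcases hrun.2.2.2.2.1 with rfl | hout
  · exact absurd hp.1 (by omega)
  · exact hout (hp.mem_of_mem_Icc hT (mem_Icc.2 ⟨by omega, by grind⟩))

lemma IsRun.feasible_replaceOn_and_pipeSet_subset (hF : Feasible C n T M) (hrun : IsRun n M t j k)
    (hidle : ∀ a ∈ Icc j k, t ∉ T a) {u lo hi : ℕ} (hu : u ∈ (Icc 1 n).biUnion T)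
    (hlo : j ≤ lo) (hhi : hi ≤ k) (hu' : ∀ a ∈ Icc lo hi, u ∉ M a) :
    Feasible C n T (replaceOn M t u lo hi) ∧
      pipeSet n T M ⊆ pipeSet n T (replaceOn M t u lo hi) := by
  have hsub : ∀ a ∈ Icc lo hi, a ∈ Icc j k := fun a ha => by grind
  refine ⟨hF.replaceOn hu fun a ha => ⟨hrun.2.2.2.1 a (hsub a ha), hu' a ha,
    hidle a (hsub a ha)⟩, pipeSet_subset_replaceOn fun s e hp i hi => ?_⟩
  have := hrun.notMem_Ioo_of_isPipe (fun i hi => (hF i hi).1) hidle hp hi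
  omega

lemma IsRun.exists_switches_lt_of_two_le (hF : Feasible C n T M) (hrun : IsRun n M t j k)
    (hidle : ∀ a ∈ Icc j k, t ∉ T a) (hj : 2 ≤ j) :
    ∃ M', Feasible C n T M' ∧ pipeSet n T M ⊆ pipeSet n T M' ∧ switches n M' < switches n M := by
  have ⟨_, hjk, hkn, hpres, hstart, hend⟩ := hrun
  have htj : t ∉ M (j - 1) := hstart.resolve_left (by omega)
  have hj' : j - 1 ∈ Icc 1 n := mem_Icc.2 ⟨by omega, by omega⟩
  obtain ⟨u, huj', huj⟩ := exists_mem_sdiff_of_card_eq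
    (by rw [(hF _ hj').2.1, (hF j (mem_Icc.2 ⟨by omega, by omega⟩)).2.1])
    (hpres j (mem_Icc.2 ⟨le_rfl, hjk⟩)) htj
  -- `u` leaves the magazine at `j`; keeping it instead of `t` saves loading `t` at `j`
  obtain ⟨K, hjK, hKk, hrunu, hendu⟩ := exists_run_end (p := (u ∉ M ·)) hjk huj
  obtain ⟨hF', hpipes⟩ :=
    hrun.feasible_replaceOn_and_pipeSet_subset hF hidle ((hF _ hj').2.2 huj') le_rfl hKk hrunu
  refine ⟨_, hF', hpipes, switches_replaceOn_lt (by omega) hjK (by omega)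
    (fun a ha => ⟨hpres a (by grind), hrunu a ha⟩) (fun _ => huj') (fun hKn => ?_)
    (Or.inl ⟨hj, htj⟩)⟩
  rcases hendu with rfl | huK
  · exact Or.inr (hend.resolve_left (by omega))
  · exact Or.inl (not_not.1 huK)

lemma IsRun.exists_switches_lt_of_eq_one (hF : Feasible C n T M) (hrun : IsRun n M t j k)
    (hidle : ∀ a ∈ Icc j k, t ∉ T a) (hj : j = 1) :
    ∃ M', Feasible C n T M' ∧ pipeSet n T M ⊆ pipeSet n T M' ∧ switches n M' < switches n M := by
  have ⟨_, hjk, hkn, hpres, _, hend⟩ := hrun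
  subst hj
  -- `t` is used by some job, necessarily after the run, so the run ends with an unloading
  have hkn' : k < n := by
    obtain ⟨a, ha, hta⟩ := mem_biUnion.1 ((hF 1 (mem_Icc.2 ⟨le_rfl, by omega⟩)).2.2
      (hpres 1 (mem_Icc.2 ⟨le_rfl, hjk⟩)))
    by_contra hkn'
    exact hidle a (by grind) hta
  have htk : t ∉ M (k + 1) := hend.resolve_left (by omega)
  have hk' : k + 1 ∈ Icc 1 n := mem_Icc.2 ⟨by omega, by omega⟩
  obtain ⟨u, huk', huk⟩ := exists_mem_sdiff_of_card_eq
    (by rw [(hF _ hk').2.1, (hF k (mem_Icc.2 ⟨hjk, hkn⟩)).2.1])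
    (hpres k (mem_Icc.2 ⟨hjk, le_rfl⟩)) htk
  -- `u` is loaded at `k + 1`; keeping it instead of `t` before that saves this loading
  obtain ⟨J, h1J, hJk, hrunu, hstartu⟩ := exists_run_start (p := (u ∉ M ·)) hjk huk
  obtain ⟨hF', hpipes⟩ :=
    hrun.feasible_replaceOn_and_pipeSet_subset hF hidle ((hF _ hk').2.2 huk') h1J le_rfl hrunu
  refine ⟨_, hF', hpipes, switches_replaceOn_lt h1J hJk hkn
    (fun a ha => ⟨hpres a (by grind), hrunu a ha⟩) (fun hJ => ?_) (fun _ => Or.inl huk')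
    (Or.inr ⟨hkn', huk', htk⟩)⟩
  exact not_not.1 (hstartu.resolve_left (by omega))

lemma Feasible.exists_switches_lt (hF : Feasible C n T M) (hM : ¬ NoIdleRun n T M) :
    ∃ M', Feasible C n T M' ∧ pipeSet n T M ⊆ pipeSet n T M' ∧ switches n M' < switches n M := by
  simp only [NoIdleRun, not_forall, not_exists, not_and] at hM
  obtain ⟨t, j, k, hrun, hidle⟩ := hM
  rcases hrun.1.eq_or_lt with hj | hj
  · exact hrun.exists_switches_lt_of_eq_one hF hidle hj.symm
  · exact hrun.exists_switches_lt_of_two_le hF hidle hj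

lemma Feasible.exists_noIdleRun (hF : Feasible C n T M) :
    ∃ M', Feasible C n T M' ∧ NoIdleRun n T M' ∧ (pipeSet n T M).card ≤ (pipeSet n T M').card := by
  induction hs : switches n M using Nat.strong_induction_on generalizing M with
  | _ s ih =>
    by_cases hM : NoIdleRun n T M
    · exact ⟨M, hF, hM, le_rfl⟩
    obtain ⟨M', hF', hsub, hlt⟩ := hF.exists_switches_lt hM
    obtain ⟨M'', hF'', hM'', hle⟩ := ih _ (hs ▸ hlt) hF' rfl
    exact ⟨M'', hF'', hM'', (card_le_card hsub).trans hle⟩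

end IdleRuns

lemma exists_feasible {n C : ℕ} {T : ℕ → Finset ℕ} (hTc : ∀ i ∈ Icc 1 n, (T i).card ≤ C)
    (hm : C ≤ ((Icc 1 n).biUnion T).card) : ∃ M, Feasible C n T M := by
  have h : ∀ i ∈ Icc 1 n, ∃ S, T i ⊆ S ∧ S ⊆ (Icc 1 n).biUnion T ∧ S.card = C := fun i hi =>
    exists_subsuperset_card_eq (subset_biUnion_of_mem T hi) (hTc i hi) hm
  choose! M hM using h
  exact ⟨M, fun i hi => ⟨(hM i hi).1, (hM i hi).2.2, (hM i hi).2.1⟩⟩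

lemma bddAbove_card_pipeSet (n C : ℕ) (T : ℕ → Finset ℕ) :
    BddAbove {k | ∃ M, Feasible C n T M ∧ (pipeSet n T M).card = k} := by
  refine ⟨((Icc 1 n ×ˢ Icc 1 n) ×ˢ (Icc 1 n).biUnion T).card, ?_⟩
  rintro _ ⟨M, -, rfl⟩
  classical
  exact card_filter_le _ _

theorem tlp_objective_via_pipes_general (n C : ℕ) (T : ℕ → Finset ℕ) (hn : 1 ≤ n)
    (hTc : ∀ i ∈ Finset.Icc 1 n, (T i).card ≤ C)
    (hm : C < ((Finset.Icc 1 n).biUnion T).card) :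
    sInf {k | ∃ M, Feasible C n T M ∧ switches n M = k}
      = (∑ i ∈ Finset.Icc 1 n, (T i).card) - C
        - sSup {k | ∃ M, Feasible C n T M ∧ (pipeSet n T M).card = k} := by
  set P := {k | ∃ M, Feasible C n T M ∧ (pipeSet n T M).card = k}
  have hbdd : BddAbove P := bddAbove_card_pipeSet n C T
  obtain ⟨M₀, hM₀⟩ := exists_feasible hTc hm.le
  obtain ⟨M₁, hM₁, hmax⟩ := Nat.sSup_mem (s := P) ⟨_, M₀, hM₀, rfl⟩ hbdd
  obtain ⟨M₂, hM₂, hidle, hle⟩ := hM₁.exists_noIdleRun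
  have hopt : (pipeSet n T M₂).card = sSup P :=
    le_antisymm (le_csSup hbdd ⟨M₂, hM₂, rfl⟩) (hmax ▸ hle)
  refine IsLeast.csInf_eq ⟨⟨M₂, hM₂, ?_⟩, ?_⟩
  · have := hM₂.sum_card_eq hn hidle
    omega
  · rintro _ ⟨M, hM, rfl⟩
    have := hM.sum_card_le hn
    have := le_csSup hbdd ⟨M, hM, rfl⟩
    omega

/-- Theorem 1: the minimum number of tool switches over all feasible full-magazine
sequences equals `∑ |T i| − C − max{|P(M)|}`. -/
theorem tlp_objective_via_pipes (n C : ℕ) (T : ℕ → Finset ℕ) (hn : 1 ≤ n)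
    (hout : ∀ i, i ∉ Finset.Icc 1 n → T i = ∅)
    (hTc : ∀ i ∈ Finset.Icc 1 n, (T i).card ≤ C)
    (hm : C < ((Finset.Icc 1 n).biUnion T).card) :
    sInf {k | ∃ M, Feasible C n T M ∧ switches n M = k}
      = (∑ i ∈ Finset.Icc 1 n, (T i).card) - C
        - sSup {k | ∃ M, Feasible C n T M ∧ (pipeSet n T M).card = k} :=
  tlp_objective_via_pipes_general n C T hn hTc hm
end

section
/- Let L ∈ L̂, i.e., every useless vertex of L lies on a pipe (U(L) = U(P(L))). Let (s,e,t) be a possible pipe not in P(L) (that is, t ∈ T_s ∩ T_e, t ∉ T_i for s<i<e, but t is not present in all intermediate states). If |L_j| < C for all s < j < e, then also t ∉ L_j for all s < j < e; hence the pipe (s,e,t) can be constructed by adding t to L_{s+1},…,L_{e-1}. -/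
/-- A potential pipe (element of `Π(L̄)`): only refers to the job tool sets. -/
def PotentialPipe (n : ℕ) (T : ℕ → Finset ℕ) (s e t : ℕ) : Prop :=
  1 ≤ s ∧ s < e ∧ e ≤ n ∧ t ∈ T s ∧ t ∈ T e ∧ ∀ i ∈ Finset.Ioo s e, t ∉ T i

/-- Lemma 4: if every useless vertex of `L` lies on a realized pipe, and `(s,e,t)` is a
possible pipe not realized in `L` with all intermediate states having an empty slot,
then `t` is absent from all intermediate states (so the pipe can be constructed). -/
theorem constructible_pipe (n C : ℕ) (T L : ℕ → Finset ℕ)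
    (hfeas : ∀ i ∈ Finset.Icc 1 n, T i ⊆ L i ∧ (L i).card ≤ C)
    (hhat : ∀ k ∈ Finset.Icc 1 n, ∀ t ∈ L k, t ∉ T k →
      ∃ s e, IsPipe n T L s e t ∧ k ∈ Finset.Ioo s e)
    (s e t : ℕ) (hpot : PotentialPipe n T s e t)
    (hnot : ¬ IsPipe n T L s e t)
    (hslots : ∀ j ∈ Finset.Ioo s e, (L j).card < C) :
    ∀ j ∈ Finset.Ioo s e, t ∉ L j := by
  intro j hj ht
  obtain ⟨h1s, hse, hen, hts, hte, hpT⟩ := hpot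
  simp only [Finset.mem_Ioo] at hj
  have hjI : j ∈ Finset.Icc 1 n := by simp only [Finset.mem_Icc]; omega
  have htTj : t ∉ T j := hpT j (by simp only [Finset.mem_Ioo]; omega)
  obtain ⟨s', e', ⟨h1s', hs'e', he'n, hts', hte', hpipe⟩, hj'⟩ := hhat j hjI t ht htTj
  simp only [Finset.mem_Ioo] at hj'
  have hs' : s' ≤ s := by
    by_contra h
    push_neg at h
    exact (hpT s' (by simp only [Finset.mem_Ioo]; omega)) hts'
  have he' : e ≤ e' := by
    by_contra h
    push_neg at h
    exact (hpT e' (by simp only [Finset.mem_Ioo]; omega)) hte'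
  apply hnot
  refine ⟨h1s, hse, hen, hts, hte, fun i hi => ?_⟩
  simp only [Finset.mem_Ioo] at hi
  exact ⟨hpT i (by simp only [Finset.mem_Ioo]; omega),
    (hpipe i (by simp only [Finset.mem_Ioo]; omega)).2⟩
end

section
/- If a tool t appears in an intermediate position j of a potential pipe (s,e,t) (i.e., s < j < e, t ∈ L_j, t ∉ T_j) in a state sequence L whose useless vertices are all covered by realized pipes, then the realized pipe covering (j,t) must be exactly (s,e,t). In particular, a potential pipe with some intermediate presence of its tool is already fully realized. -/
/-- Core step in the proof of Lemma 4: if the tool `t` of a potential pipe `(s,e,t)`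
appears at some intermediate position `j` in a sequence `L` all of whose useless vertices
are covered by realized pipes, then the realized pipe through `(j,t)` is exactly
`(s,e,t)`; in particular the potential pipe is already fully realized. -/
theorem intermediate_presence_realized (n : ℕ) (T L : ℕ → Finset ℕ)
    (hfeas : ∀ i ∈ Finset.Icc 1 n, T i ⊆ L i)
    (hhat : ∀ k ∈ Finset.Icc 1 n, ∀ t ∈ L k, t ∉ T k →
      ∃ s e, IsPipe n T L s e t ∧ k ∈ Finset.Ioo s e)
    (s e t j : ℕ) (hpot : PotentialPipe n T s e t)
    (hj : j ∈ Finset.Ioo s e) (hjL : t ∈ L j) :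
    (∀ s' e', IsPipe n T L s' e' t → j ∈ Finset.Ioo s' e' → s' = s ∧ e' = e) ∧
    (∀ i ∈ Finset.Ioo s e, t ∈ L i) := by
  obtain ⟨hs1, hse, hen, hts, hte, hmid⟩ := hpot
  simp only [Finset.mem_Ioo] at hj
  have key : ∀ s' e', IsPipe n T L s' e' t → j ∈ Finset.Ioo s' e' → s' = s ∧ e' = e := by
    intro s' e' hpipe hj'
    obtain ⟨hs1', hse', hen', hts', hte', hmid'⟩ := hpipe
    simp only [Finset.mem_Ioo] at hj'
    -- s' ≤ s
    have hs'le : s' ≤ s := by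
      by_contra h
      push_neg at h
      exact (hmid s' (Finset.mem_Ioo.mpr ⟨h, lt_trans hj'.1 hj.2⟩)) hts'
    have he'ge : e ≤ e' := by
      by_contra h
      push_neg at h
      exact (hmid e' (Finset.mem_Ioo.mpr ⟨lt_trans hj.1 hj'.2, h⟩)) hte'
    have hs : s' = s := by
      rcases lt_or_eq_of_le hs'le with h | h
      · exact absurd hts ((hmid' s (Finset.mem_Ioo.mpr ⟨h, lt_of_lt_of_le (lt_trans hj.1 hj.2) he'ge⟩)).1)
      · exact h
    have he : e' = e := by
      rcases lt_or_eq_of_le he'ge with h | h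
      · exact absurd hte ((hmid' e (Finset.mem_Ioo.mpr ⟨hs ▸ (hj.1.trans hj.2), h⟩)).1)
      · exact h.symm
    exact ⟨hs, he⟩
  refine ⟨key, ?_⟩
  have hjIcc : j ∈ Finset.Icc 1 n :=
    Finset.mem_Icc.mpr ⟨le_trans hs1 (le_of_lt hj.1), le_trans (le_of_lt hj.2) hen⟩
  have hjT : t ∉ T j := hmid j (Finset.mem_Ioo.mpr hj)
  obtain ⟨s', e', hpipe, hj'⟩ := hhat j hjIcc t hjL hjT
  obtain ⟨hs, he⟩ := key s' e' hpipe hj'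
  subst hs; subst he
  intro i hi
  exact (hpipe.2.2.2.2.2 i hi).2
end

section
/- After the forward pass of the ToFullMag algorithm (iterating over pairs (i,i+1) for i = 1,…,n−1, each time adding tools from M_i to M_{i+1} while |M_{i+1}| < C), the final state satisfies |L'_n| = C, provided m = |∪_{i=1}^n T_i| ≥ C. -/
def fillFrom (C : ℕ) (src dst : Finset ℕ) : Finset ℕ :=
  dst ∪ (((src \ dst).sort (· ≤ ·)).take (C - dst.card)).toFinset

def passPairs (C : ℕ) (pairs : List (ℕ × ℕ)) (L : ℕ → Finset ℕ) : ℕ → Finset ℕ :=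
  pairs.foldl (fun M p => Function.update M p.2 (fillFrom C (M p.1) (M p.2))) L

def fwdPairs (n : ℕ) : List (ℕ × ℕ) := (List.range (n - 1)).map (fun i => (i + 1, i + 2))

def bwdPairs (n : ℕ) : List (ℕ × ℕ) := (List.range (n - 1)).map (fun i => (n - i, n - i - 1))

def toFullMag (C n : ℕ) (L : ℕ → Finset ℕ) : ℕ → Finset ℕ :=
  passPairs C (bwdPairs n) (passPairs C (fwdPairs n) L)

def addRange (t s e : ℕ) (M : ℕ → Finset ℕ) : ℕ → Finset ℕ :=
  fun i => if s < i ∧ i < e then insert t (M i) else M i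

def gpcaStep (C : ℕ) (T : ℕ → Finset ℕ) (e : ℕ) (M : ℕ → Finset ℕ) (t : ℕ) : ℕ → Finset ℕ :=
  match ((List.range e).filter (fun s => decide (t ∈ T s))).max? with
  | none => M
  | some s => if ∀ i ∈ Finset.Ioo s e, (M i).card < C then addRange t s e M else M

def GPCA (C n : ℕ) (T : ℕ → Finset ℕ) : ℕ → Finset ℕ :=
  (List.range n).foldl
    (fun M e => ((T (e + 1)).sort (· ≤ ·)).foldl (gpcaStep C T (e + 1)) M) T

/-!
Each step `fillFrom` tops its target up to `min C |src ∪ dst|` elements taken from `src ∪ dst`,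
so a state that stays below capacity after a step contains its source. Inductively, after the
`k`-th step the state `k + 1` is either full or contains `T 1 ∪ ⋯ ∪ T (k + 1)`; for `k + 1 = n`
the second alternative has at least `C` elements, so it is full as well.
-/

open Finset

lemma toFinset_take_sort_subset (s : Finset ℕ) (k : ℕ) :
    ((s.sort (· ≤ ·)).take k).toFinset ⊆ s := fun _ hx =>
  (mem_sort _).1 (List.mem_of_mem_take (List.mem_toFinset.1 hx))

section fillFrom

variable (C : ℕ) (src dst : Finset ℕ)

lemma fillFrom_subset : fillFrom C src dst ⊆ src ∪ dst :=
  union_subset subset_union_right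
    ((toFinset_take_sort_subset _ _).trans (sdiff_subset.trans subset_union_left))

lemma card_fillFrom (h : dst.card ≤ C) : (fillFrom C src dst).card = min C (src ∪ dst).card := by
  set l := (src \ dst).sort (· ≤ ·)
  have hdisj : Disjoint dst (l.take (C - dst.card)).toFinset :=
    disjoint_sdiff.mono_right (toFinset_take_sort_subset _ _)
  have hnodup : (l.take (C - dst.card)).Nodup := (sort_nodup _ _).sublist (List.take_sublist _ _)
  rw [fillFrom, card_union_of_disjoint hdisj, List.toFinset_card_of_nodup hnodup,
    List.length_take, length_sort, ← card_sdiff_add_card]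
  omega

lemma subset_fillFrom_of_card_lt (h : (fillFrom C src dst).card < C) :
    src ⊆ fillFrom C src dst := by
  have hdst : dst.card ≤ C := (card_le_card subset_union_left).trans h.le
  have hfill : fillFrom C src dst = src ∪ dst := by
    refine eq_of_subset_of_card_le (fillFrom_subset C src dst) ?_
    rw [card_fillFrom C src dst hdst] at h ⊢
    omega
  exact hfill ▸ subset_union_left

end fillFrom

lemma passPairs_append (C : ℕ) (p q : List (ℕ × ℕ)) (L : ℕ → Finset ℕ) :
    passPairs C (p ++ q) L = passPairs C q (passPairs C p L) :=
  List.foldl_append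

lemma fwdPairs_add_two (k : ℕ) : fwdPairs (k + 2) = fwdPairs (k + 1) ++ [(k + 1, k + 2)] := by
  simp [fwdPairs, List.range_succ]

section fwdPass

variable (C : ℕ) (L : ℕ → Finset ℕ)

lemma passPairs_fwdPairs_apply_of_lt {k j : ℕ} (hj : k + 1 < j) :
    passPairs C (fwdPairs (k + 1)) L j = L j := by
  induction k with
  | zero => rfl
  | succ k ih =>
    rw [fwdPairs_add_two, passPairs_append, passPairs, List.foldl_cons, List.foldl_nil,
      Function.update_of_ne (by omega), ih (by omega)]

lemma passPairs_fwdPairs_add_two_apply (k : ℕ) :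
    passPairs C (fwdPairs (k + 2)) L (k + 2) =
      fillFrom C (passPairs C (fwdPairs (k + 1)) L (k + 1)) (L (k + 2)) := by
  rw [fwdPairs_add_two, passPairs_append, passPairs, List.foldl_cons, List.foldl_nil,
    Function.update_self, passPairs_fwdPairs_apply_of_lt C L (Nat.lt_succ_self _)]

lemma fwdPass_full_or_biUnion_subset (T : ℕ → Finset ℕ) (n : ℕ)
    (hfeas : ∀ i ∈ Icc 1 n, T i ⊆ L i ∧ (L i).card ≤ C) (k : ℕ) (hk : k + 1 ≤ n) :
    (passPairs C (fwdPairs (k + 1)) L (k + 1)).card ≤ C ∧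
      ((passPairs C (fwdPairs (k + 1)) L (k + 1)).card = C ∨
        (Icc 1 (k + 1)).biUnion T ⊆ passPairs C (fwdPairs (k + 1)) L (k + 1)) := by
  induction k with
  | zero =>
    obtain ⟨hT, hL⟩ := hfeas 1 (by simp; omega)
    refine ⟨hL, Or.inr ?_⟩
    show (Icc 1 1).biUnion T ⊆ L 1
    simpa using hT
  | succ k ih =>
    obtain ⟨-, ihfull⟩ := ih (by omega)
    obtain ⟨hT, hL⟩ := hfeas (k + 2) (by simp; omega)
    set M := passPairs C (fwdPairs (k + 1)) L (k + 1)
    rw [passPairs_fwdPairs_add_two_apply]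
    have hle : (fillFrom C M (L (k + 2))).card ≤ C :=
      (card_fillFrom C M _ hL).trans_le (min_le_left _ _)
    refine ⟨hle, hle.eq_or_lt.imp id fun hlt => ?_⟩
    have hM := subset_fillFrom_of_card_lt C M _ hlt
    have hcovers : (Icc 1 (k + 1)).biUnion T ⊆ M :=
      ihfull.resolve_left fun h => by have := card_le_card hM; omega
    refine biUnion_subset.2 fun i hi => ?_
    rcases (mem_Icc.1 hi).2.lt_or_eq with hi' | rfl
    · exact (subset_biUnion_of_mem T (mem_Icc.2 ⟨(mem_Icc.1 hi).1, by omega⟩)).trans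
        (hcovers.trans hM)
    · exact hT.trans subset_union_left

end fwdPass

/-- After the forward pass of ToFullMag (pairs (1,2),…,(n−1,n), each filling the second
state from the first while below capacity), the last magazine state is full, provided
`m = |⋃ T i| ≥ C`. -/
theorem fwd_pass_last_full (n C : ℕ) (T L : ℕ → Finset ℕ) (hn : 1 ≤ n)
    (hfeas : ∀ i ∈ Finset.Icc 1 n, T i ⊆ L i ∧ (L i).card ≤ C)
    (hm : C ≤ ((Finset.Icc 1 n).biUnion T).card) :
    ((passPairs C (fwdPairs n) L) n).card = C := by
  obtain ⟨k, rfl⟩ := Nat.exists_eq_add_of_le' hn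
  obtain ⟨hle, hfull | hcovers⟩ := fwdPass_full_or_biUnion_subset C L T (k + 1) hfeas k le_rfl
  · exact hfull
  · exact le_antisymm hle (hm.trans (card_le_card hcovers))
end

section
/- ToFullMag does not destroy or create fully-useless segments: if L ∈ L has H_0(L) = ∅ (no maximal segment of presence of a tool on which the tool is never needed), then M = ToFullMag(L) also satisfies H_0(M) = ∅. -/
lemma fillFrom_left (C : ℕ) (src dst : Finset ℕ) : dst ⊆ fillFrom C src dst :=
  Finset.subset_union_left

lemma fillFrom_sub (C : ℕ) (src dst : Finset ℕ) : fillFrom C src dst ⊆ dst ∪ src := by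
  intro x hx
  rcases Finset.mem_union.1 hx with h | h
  · exact Finset.mem_union_left _ h
  · have := List.take_subset _ _ (List.mem_toFinset.1 h)
    have := (Finset.mem_sort (α := ℕ) (· ≤ ·)).1 this
    exact Finset.mem_union_right _ (Finset.mem_sdiff.1 this).1

lemma passPairs_succ (C : ℕ) (g : ℕ → ℕ × ℕ) (L : ℕ → Finset ℕ) (k : ℕ) :
    passPairs C ((List.range (k+1)).map g) L =
      Function.update (passPairs C ((List.range k).map g) L) (g k).2
        (fillFrom C (passPairs C ((List.range k).map g) L (g k).1)
                    (passPairs C ((List.range k).map g) L (g k).2)) := by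
  simp [passPairs, List.range_succ]

def fwdP (C : ℕ) (L : ℕ → Finset ℕ) (k : ℕ) : ℕ → Finset ℕ :=
  passPairs C ((List.range k).map fun i => (i + 1, i + 2)) L

def bwdP (C n : ℕ) (F : ℕ → Finset ℕ) (k : ℕ) : ℕ → Finset ℕ :=
  passPairs C ((List.range k).map fun i => (n - i, n - i - 1)) F

lemma fwd_props (C : ℕ) (L : ℕ → Finset ℕ) (k : ℕ) :
    (∀ j, j < 2 ∨ k + 1 < j → fwdP C L k j = L j) ∧
    (∀ j, L j ⊆ fwdP C L k j) ∧
    (∀ j, 2 ≤ j → j ≤ k + 1 → fwdP C L k j ⊆ L j ∪ fwdP C L k (j - 1)) := by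
  induction k with
  | zero =>
    refine ⟨fun j _ => rfl, fun j => subset_rfl, fun j h1 h2 => by omega⟩
  | succ k ih =>
    obtain ⟨ihA, ihB, ihC⟩ := ih
    have hstep : fwdP C L (k+1) = Function.update (fwdP C L k) (k+2)
        (fillFrom C (fwdP C L k (k+1)) (fwdP C L k (k+2))) :=
      passPairs_succ C (fun i => (i + 1, i + 2)) L k
    refine ⟨?_, ?_, ?_⟩
    · intro j hj
      have hne : j ≠ k + 2 := by omega
      rw [hstep, Function.update_of_ne hne]
      exact ihA j (by omega)
    · intro j
      rw [hstep]
      by_cases hj : j = k + 2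
      · subst hj
        rw [Function.update_self]
        exact (ihB _).trans (fillFrom_left _ _ _)
      · rw [Function.update_of_ne hj]; exact ihB j
    · intro j h2 hk
      rw [hstep]
      by_cases hj : j = k + 2
      · subst hj
        rw [Function.update_self]
        have h1 : fwdP C L k (k + 2) = L (k + 2) := ihA _ (by omega)
        have h3 : (k + 2 - 1) ≠ k + 2 := by omega
        rw [Function.update_of_ne h3]
        rw [h1]
        exact fillFrom_sub C (fwdP C L k (k+1)) (L (k+2))
      · have h3 : j - 1 ≠ k + 2 := by omega
        rw [Function.update_of_ne hj, Function.update_of_ne h3]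
        exact ihC j h2 (by omega)

lemma bwd_props (C n : ℕ) (F : ℕ → Finset ℕ) (hn : 1 ≤ n) :
    ∀ k, k ≤ n - 1 →
    (∀ j, j < n - k ∨ n - 1 < j → bwdP C n F k j = F j) ∧
    (∀ j, F j ⊆ bwdP C n F k j) ∧
    (∀ j, n - k ≤ j → j ≤ n - 1 → bwdP C n F k j ⊆ F j ∪ bwdP C n F k (j + 1)) := by
  intro k
  induction k with
  | zero =>
    exact fun _ => ⟨fun j _ => rfl, fun j => subset_rfl, fun j h1 h2 => by omega⟩
  | succ k ih =>
    intro hk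
    obtain ⟨ihA, ihB, ihC⟩ := ih (by omega)
    have hstep : bwdP C n F (k+1) = Function.update (bwdP C n F k) (n - k - 1)
        (fillFrom C (bwdP C n F k (n - k)) (bwdP C n F k (n - k - 1))) :=
      passPairs_succ C (fun i => (n - i, n - i - 1)) F k
    refine ⟨?_, ?_, ?_⟩
    · intro j hj
      have hne : j ≠ n - k - 1 := by omega
      rw [hstep, Function.update_of_ne hne]
      exact ihA j (by omega)
    · intro j
      rw [hstep]
      by_cases hj : j = n - k - 1
      · subst hj
        rw [Function.update_self]
        exact (ihB _).trans (fillFrom_left _ _ _)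
      · rw [Function.update_of_ne hj]; exact ihB j
    · intro j h1 h2
      rw [hstep]
      by_cases hj : j = n - k - 1
      · subst hj
        rw [Function.update_self]
        have hA : bwdP C n F k (n - k - 1) = F (n - k - 1) := ihA _ (by omega)
        have h3 : (n - k - 1) + 1 ≠ n - k - 1 := by omega
        rw [Function.update_of_ne h3]
        have heq : (n - k - 1) + 1 = n - k := by omega
        rw [heq]
        rw [hA]
        exact fillFrom_sub C (bwdP C n F k (n - k)) (F (n - k - 1))
      · have h3 : j + 1 ≠ n - k - 1 := by omega
        rw [Function.update_of_ne hj, Function.update_of_ne h3]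
        exact ihC j (by omega) h2

lemma claimF (C n : ℕ) (L : ℕ → Finset ℕ) :
    ∀ j t, t ∈ fwdP C L (n - 1) j →
      ∃ m, m ≤ j ∧ t ∈ L m ∧ ∀ i, m ≤ i → i ≤ j → t ∈ fwdP C L (n - 1) i := by
  intro j
  induction j using Nat.strong_induction_on with
  | _ j ih =>
    intro t ht
    obtain ⟨hA, hB, hC⟩ := fwd_props C L (n - 1)
    by_cases hL : t ∈ L j
    · exact ⟨j, le_refl _, hL, fun i h1 h2 => by rw [show i = j by omega]; exact ht⟩
    · have hj : 2 ≤ j ∧ j ≤ n - 1 + 1 := by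
        by_contra hcon
        rw [hA j (by omega)] at ht
        exact hL ht
      have ht' : t ∈ fwdP C L (n - 1) (j - 1) := by
        have := hC j hj.1 hj.2 ht
        rcases Finset.mem_union.1 this with h | h
        · exact absurd h hL
        · exact h
      obtain ⟨m, hm1, hm2, hm3⟩ := ih (j - 1) (by omega) t ht'
      refine ⟨m, by omega, hm2, fun i h1 h2 => ?_⟩
      by_cases hi : i = j
      · rw [hi]; exact ht
      · exact hm3 i h1 (by omega)

lemma claimG (C n : ℕ) (F : ℕ → Finset ℕ) (hn : 1 ≤ n) :
    ∀ d j t, n - j ≤ d → t ∈ bwdP C n F (n - 1) j →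
      ∃ m, j ≤ m ∧ t ∈ F m ∧ ∀ i, j ≤ i → i ≤ m → t ∈ bwdP C n F (n - 1) i := by
  intro d
  induction d with
  | zero =>
    intro j t hd ht
    obtain ⟨hA, hB, hC⟩ := bwd_props C n F hn (n - 1) (le_refl _)
    rw [hA j (by omega)] at ht
    exact ⟨j, le_refl _, ht, fun i h1 h2 => by
      rw [show i = j by omega, hA j (by omega)]; exact ht⟩
  | succ d ih =>
    intro j t hd ht
    obtain ⟨hA, hB, hC⟩ := bwd_props C n F hn (n - 1) (le_refl _)
    by_cases hF : t ∈ F j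
    · exact ⟨j, le_refl _, hF, fun i h1 h2 => by rw [show i = j by omega]; exact ht⟩
    · have hj : n - (n - 1) ≤ j ∧ j ≤ n - 1 := by
        by_contra hcon
        rw [hA j (by omega)] at ht
        exact hF ht
      have ht' : t ∈ bwdP C n F (n - 1) (j + 1) := by
        have := hC j hj.1 hj.2 ht
        rcases Finset.mem_union.1 this with h | h
        · exact absurd h hF
        · exact h
      obtain ⟨m, hm1, hm2, hm3⟩ := ih (j + 1) t (by omega) ht'
      refine ⟨m, by omega, hm2, fun i h1 h2 => ?_⟩
      by_cases hi : i = j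
      · rw [hi]; exact ht
      · exact hm3 i (by omega) h2


/-- Statement 2 of Lemma 3: if `L` has no fully-useless segment, then neither does
`ToFullMag(L)`. -/
theorem toFullMag_no_h0 (n C : ℕ) (T L : ℕ → Finset ℕ) (hn : 1 ≤ n)
    (hfeas : ∀ i ∈ Finset.Icc 1 n, T i ⊆ L i ∧ (L i).card ≤ C)
    (hout : ∀ i, i ∉ Finset.Icc 1 n → T i = ∅ ∧ L i = ∅)
    (hm : C ≤ ((Finset.Icc 1 n).biUnion T).card)
    (h0 : ∀ s e t, ¬ IsH0 n T L s e t) :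
    ∀ s e t, ¬ IsH0 n T (toFullMag C n L) s e t := by
  intro s e t hH
  have hMG : toFullMag C n L = bwdP C n (fwdP C L (n - 1)) (n - 1) := rfl
  set F := fwdP C L (n - 1) with hF
  set G := bwdP C n F (n - 1) with hG
  rw [hMG] at hH
  obtain ⟨hs1, hse, hen, hmemG, hleft, hright⟩ := hH
  have hGF : ∀ j, F j ⊆ G j := (bwd_props C n F hn (n - 1) (le_refl _)).2.1
  have hLF : ∀ j, L j ⊆ F j := (fwd_props C L (n - 1)).2.1
  have hLG : ∀ j, L j ⊆ G j := fun j => (hLF j).trans (hGF j)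
  have hL0 : L 0 = ∅ := (hout 0 (by simp)).2
  have hLn : ∀ i, n < i → L i = ∅ := fun i hi =>
    (hout i (by simp [Finset.mem_Icc]; omega)).2
  have htGs : t ∈ G s := (hmemG s (Finset.mem_Icc.2 ⟨le_refl _, hse⟩)).2
  obtain ⟨m1, hm11, hm12, hm13⟩ := claimG C n F hn n s t (by omega) htGs
  obtain ⟨m, hmm1, htLm, hmF⟩ := claimF C n L m1 t hm12
  have hGm : ∀ i, m ≤ i → i ≤ m1 → t ∈ G i := fun i a b => hGF i (hmF i a b)
  have hms : s ≤ m := by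
    by_contra hcon
    push_neg at hcon
    have hGsm : t ∈ G (s - 1) := hGm (s - 1) (by omega) (by omega)
    rcases hleft with h | h
    · exact h hGsm
    · have hz : m = 0 := by omega
      rw [hz, hL0] at htLm
      exact absurd htLm (Finset.notMem_empty t)
  have hme : m ≤ e := by
    by_contra hcon
    push_neg at hcon
    have hGe : t ∈ G (e + 1) := hm13 (e + 1) (by omega) (by omega)
    rcases hright with h | h
    · exact h hGe
    · have hz : L m = ∅ := hLn m (by omega)
      rw [hz] at htLm
      exact absurd htLm (Finset.notMem_empty t)
  have hLs : t ∉ L (s - 1) := by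
    rcases hleft with h | h
    · exact fun ht => h (hLG _ ht)
    · rw [h]; simp [hL0]
  have hLe : t ∉ L (e + 1) := by
    rcases hright with h | h
    · exact fun ht => h (hLG _ ht)
    · rw [h, hLn (n + 1) (by omega)]; exact Finset.notMem_empty t
  set A := (Finset.Icc 0 m).filter (fun i => t ∉ L i) with hA
  have hAne : s - 1 ∈ A := by
    rw [hA, Finset.mem_filter, Finset.mem_Icc]
    exact ⟨⟨Nat.zero_le _, by omega⟩, hLs⟩
  set a := A.max' ⟨s - 1, hAne⟩ with ha
  have haA : a ∈ A := A.max'_mem _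
  have haL : t ∉ L a := (Finset.mem_filter.1 haA).2
  have ham : a < m := by
    have h1 := (Finset.mem_Icc.1 (Finset.mem_filter.1 haA).1).2
    rcases Nat.lt_or_ge a m with h | h
    · exact h
    · have hz : a = m := by omega
      rw [hz] at haL
      exact absurd htLm haL
  have hsa : s - 1 ≤ a := A.le_max' _ hAne
  have hseg1 : ∀ i, a + 1 ≤ i → i ≤ m → t ∈ L i := by
    intro i h1 h2
    by_contra hcon
    have hiA : i ∈ A := by
      rw [hA, Finset.mem_filter, Finset.mem_Icc]
      exact ⟨⟨Nat.zero_le _, h2⟩, hcon⟩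
    have := A.le_max' _ hiA
    omega
  set B := (Finset.Icc m (e + 1)).filter (fun i => t ∉ L i) with hB
  have hBne : e + 1 ∈ B := by
    rw [hB, Finset.mem_filter, Finset.mem_Icc]
    exact ⟨⟨by omega, le_refl _⟩, hLe⟩
  set b := B.min' ⟨e + 1, hBne⟩ with hb
  have hbB : b ∈ B := B.min'_mem _
  have hbL : t ∉ L b := (Finset.mem_filter.1 hbB).2
  have hbe : b ≤ e + 1 := B.min'_le _ hBne
  have hmb : m < b := by
    have h1 := (Finset.mem_Icc.1 (Finset.mem_filter.1 hbB).1).1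
    rcases Nat.lt_or_ge m b with h | h
    · exact h
    · have hz : b = m := by omega
      rw [hz] at hbL
      exact absurd htLm hbL
  have hseg2 : ∀ i, m ≤ i → i ≤ b - 1 → t ∈ L i := by
    intro i h1 h2
    by_contra hcon
    have hiB : i ∈ B := by
      rw [hB, Finset.mem_filter, Finset.mem_Icc]
      exact ⟨⟨h1, by omega⟩, hcon⟩
    have := B.min'_le _ hiB
    omega
  refine h0 (a + 1) (b - 1) t ⟨by omega, by omega, by omega, ?_, ?_, ?_⟩
  · intro i hi
    rw [Finset.mem_Icc] at hi
    refine ⟨(hmemG i (Finset.mem_Icc.2 ⟨by omega, by omega⟩)).1, ?_⟩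
    rcases Nat.lt_or_ge m i with h | h
    · exact hseg2 i (by omega) hi.2
    · exact hseg1 i hi.1 h
  · left; simpa using haL
  · left
    have hz : b - 1 + 1 = b := by omega
    rw [hz]
    exact hbL
end

section
/- Exchange-reduction lemma (Lemma 6): Let L ∈ L̂, (K,K') ∈ K(L) an exchange pair (remove K, construct K', |K| < |K'|), and let π ∈ K, τ ∈ K'. Write N(p) for the set of intermediate time indices of a pipe p, and N(K') = ∪_{p ∈ K'} N(p). If N(π) ∩ N(K') ⊆ N(τ), then (K,K') is not a minimal exchange pair: there exists (K̃,K̃') ∈ K(L) with K̃ ⊆ K, K̃' ⊆ K', and at least one inclusion strict. -/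
-- Removing a set `K` of pipes from `L`: delete the tool of each pipe from its
-- intermediate states.
open Classical in
noncomputable def removeK (K : Finset ((ℕ × ℕ) × ℕ)) (L : ℕ → Finset ℕ) : ℕ → Finset ℕ :=
  fun i => (L i).filter (fun t => ¬ ∃ p ∈ K, p.2 = t ∧ i ∈ Finset.Ioo p.1.1 p.1.2)

-- Constructing a set `K` of pipes in `L`: add the tool of each pipe to its
-- intermediate states.
noncomputable def addK (K : Finset ((ℕ × ℕ) × ℕ)) (L : ℕ → Finset ℕ) : ℕ → Finset ℕ :=
  fun i => L i ∪ (K.filter (fun p => i ∈ Finset.Ioo p.1.1 p.1.2)).image Prod.snd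

/-- `(K,K') ∈ K(L)`: `K` is a set of realized pipes of `L` which can be removed, after
which all the (potential, not yet realized) pipes of `K'` can be constructed without
exceeding the capacity `C`, and `|K| < |K'|`. -/
def Exchange (C n : ℕ) (T L : ℕ → Finset ℕ) (K K' : Finset ((ℕ × ℕ) × ℕ)) : Prop :=
  K.card < K'.card ∧
  (∀ p ∈ K, IsPipe n T L p.1.1 p.1.2 p.2) ∧
  (∀ p ∈ K', PotentialPipe n T p.1.1 p.1.2 p.2 ∧
    ∀ j ∈ Finset.Ioo p.1.1 p.1.2, p.2 ∉ removeK K L j) ∧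
  (∀ i ∈ Finset.Icc 1 n, ((addK K' (removeK K L)) i).card ≤ C)

/-- A minimal exchange pair: no exchange pair is strictly smaller. -/
def MinExchange (C n : ℕ) (T L : ℕ → Finset ℕ) (K K' : Finset ((ℕ × ℕ) × ℕ)) : Prop :=
  Exchange C n T L K K' ∧
  ¬ ∃ K₀ K₀', Exchange C n T L K₀ K₀' ∧
    ((K₀ ⊆ K ∧ K₀' ⊂ K') ∨ (K₀ ⊂ K ∧ K₀' ⊆ K'))

/-- `L ∈ L̂`: feasible with possibly empty slots, and every useless vertex lies on a
realized pipe. -/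
def InLhat (C n : ℕ) (T L : ℕ → Finset ℕ) : Prop :=
  (∀ i ∈ Finset.Icc 1 n, T i ⊆ L i ∧ (L i).card ≤ C) ∧
  (∀ i, i ∉ Finset.Icc 1 n → L i = ∅) ∧
  (∀ k ∈ Finset.Icc 1 n, ∀ t ∈ L k, t ∉ T k →
    ∃ s e, IsPipe n T L s e t ∧ k ∈ Finset.Ioo s e)

/-- `N(p)`: the set of intermediate time indices of a pipe `p = ((s,e),t)`. -/
def Npipe (p : (ℕ × ℕ) × ℕ) : Finset ℕ := Finset.Ioo p.1.1 p.1.2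

/-- Two potential pipes with the same tool and a common interior time coincide. -/
lemma pipe_unique {n : ℕ} {T : ℕ → Finset ℕ} {s1 e1 s2 e2 t j : ℕ}
    (h1 : PotentialPipe n T s1 e1 t) (h2 : PotentialPipe n T s2 e2 t)
    (hj1 : j ∈ Finset.Ioo s1 e1) (hj2 : j ∈ Finset.Ioo s2 e2) :
    s1 = s2 ∧ e1 = e2 := by
  obtain ⟨-, -, -, hts1, hte1, hint1⟩ := h1
  obtain ⟨-, -, -, hts2, hte2, hint2⟩ := h2
  simp only [Finset.mem_Ioo] at hj1 hj2
  constructor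
  · by_contra h
    rcases Nat.lt_or_ge s1 s2 with hlt | hge
    · exact hint1 s2 (Finset.mem_Ioo.2 ⟨hlt, lt_trans hj2.1 hj1.2⟩) hts2
    · have hlt : s2 < s1 := lt_of_le_of_ne hge fun h' => h h'.symm
      exact hint2 s1 (Finset.mem_Ioo.2 ⟨hlt, lt_trans hj1.1 hj2.2⟩) hts1
  · by_contra h
    rcases Nat.lt_or_ge e1 e2 with hlt | hge
    · exact hint2 e1 (Finset.mem_Ioo.2 ⟨lt_trans hj2.1 hj1.2, hlt⟩) hte1
    · have hlt : e2 < e1 := lt_of_le_of_ne hge fun h' => h h'.symm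
      exact hint1 e2 (Finset.mem_Ioo.2 ⟨lt_trans hj1.1 hj2.2, hlt⟩) hte2

lemma pot_of_pipe {n : ℕ} {T L : ℕ → Finset ℕ} {s e t : ℕ} (h : IsPipe n T L s e t) :
    PotentialPipe n T s e t :=
  ⟨h.1, h.2.1, h.2.2.1, h.2.2.2.1, h.2.2.2.2.1, fun i hi => (h.2.2.2.2.2 i hi).1⟩

/-- The reduced pair `(K \ {π}, K' \ {τ})` is still an exchange pair, provided that
whenever `π ∈ K'` we have chosen `τ = π`. -/
lemma exchange_reduction_aux (n C : ℕ) (T L : ℕ → Finset ℕ)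
    (hL : InLhat C n T L)
    (K K' : Finset ((ℕ × ℕ) × ℕ)) (hex : Exchange C n T L K K')
    (π τ : (ℕ × ℕ) × ℕ) (hπ : π ∈ K) (hτ : τ ∈ K')
    (hN : Npipe π ∩ K'.biUnion Npipe ⊆ Npipe τ)
    (hπτ : π ∈ K' → τ = π) :
    Exchange C n T L (K.erase π) (K'.erase τ) := by
  obtain ⟨hcard, hKpipe, hK'pot, hcap⟩ := hex
  have hπpot : PotentialPipe n T π.1.1 π.1.2 π.2 := pot_of_pipe (hKpipe π hπ)
  refine ⟨?_, fun p hp => hKpipe p (Finset.mem_of_mem_erase hp), ?_, ?_⟩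
  · rw [Finset.card_erase_of_mem hπ, Finset.card_erase_of_mem hτ]
    have := Finset.card_pos.mpr ⟨π, hπ⟩
    omega
  · intro p hp
    have hpK' := Finset.mem_of_mem_erase hp
    have hpτ : p ≠ τ := Finset.ne_of_mem_erase hp
    refine ⟨(hK'pot p hpK').1, fun j hj => ?_⟩
    have hnot := (hK'pot p hpK').2 j hj
    simp only [removeK, Finset.mem_filter, not_and, not_not] at hnot ⊢
    intro hLj
    obtain ⟨q, hqK, hq2, hqj⟩ := hnot hLj
    by_cases hqπ : q = π
    · rw [hqπ] at hq2 hqj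
      -- then `p = π`, so `π ∈ K'`, so `τ = π = p`, contradiction
      have hπpot' : PotentialPipe n T π.1.1 π.1.2 p.2 := hq2 ▸ hπpot
      have huniq := pipe_unique hπpot' (hK'pot p hpK').1 hqj hj
      have hpπ : p = π :=
        Prod.ext_iff.2 ⟨Prod.ext_iff.2 ⟨huniq.1.symm, huniq.2.symm⟩, hq2.symm⟩
      exact absurd ((hπτ (hpπ ▸ hpK')).trans hpπ.symm) (fun h => hpτ h.symm)
    · exact ⟨q, Finset.mem_erase.2 ⟨hqπ, hqK⟩, hq2, hqj⟩
  · intro i hi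
    have hC := hcap i hi
    set A := addK K' (removeK K L) i with hA
    by_cases hiπ : i ∈ Finset.Ioo π.1.1 π.1.2
    · by_cases hiK' : ∃ q ∈ K', i ∈ Finset.Ioo q.1.1 q.1.2
      · -- i is interior to some pipe of K', hence interior to τ
        obtain ⟨q0, hq0K', hq0i⟩ := hiK'
        have hiτ : i ∈ Finset.Ioo τ.1.1 τ.1.2 :=
          hN (Finset.mem_inter.2 ⟨hiπ, Finset.mem_biUnion.2 ⟨q0, hq0K', hq0i⟩⟩)
        have hτ2A : τ.2 ∈ A :=
          Finset.mem_union_right _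
            (Finset.mem_image.2 ⟨τ, Finset.mem_filter.2 ⟨hτ, hiτ⟩, rfl⟩)
        have hsub2 : addK (K'.erase τ) (removeK (K.erase π) L) i ⊆ insert π.2 A := by
          intro t ht
          rcases Finset.mem_union.1 ht with h | h
          · simp only [removeK, Finset.mem_filter] at h
            by_cases hcov : ∃ q ∈ K, q.2 = t ∧ i ∈ Finset.Ioo q.1.1 q.1.2
            · obtain ⟨q, hqK, hq2, hqi⟩ := hcov
              have hqπ : q = π := by
                by_contra hne
                exact h.2 ⟨q, Finset.mem_erase.2 ⟨hne, hqK⟩, hq2, hqi⟩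
              exact Finset.mem_insert.2 (Or.inl (hqπ ▸ hq2).symm)
            · exact Finset.mem_insert_of_mem
                (Finset.mem_union_left _ (Finset.mem_filter.2 ⟨h.1, hcov⟩))
          · refine Finset.mem_insert_of_mem (Finset.mem_union_right _ ?_)
            obtain ⟨q, hqf, hq2⟩ := Finset.mem_image.1 h
            have hq := Finset.mem_filter.1 hqf
            exact Finset.mem_image.2
              ⟨q, Finset.mem_filter.2 ⟨Finset.mem_of_mem_erase hq.1, hq.2⟩, hq2⟩
        by_cases hpt : π.2 = τ.2
        · have heq : insert π.2 A = A := Finset.insert_eq_self.2 (hpt ▸ hτ2A)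
          calc (addK (K'.erase τ) (removeK (K.erase π) L) i).card
              ≤ (insert π.2 A).card := Finset.card_le_card hsub2
            _ = A.card := by rw [heq]
            _ ≤ C := hC
        · -- τ.2 does not occur in the reduced layout at time i
          have hτnot : τ.2 ∉ addK (K'.erase τ) (removeK (K.erase π) L) i := by
            intro hmem
            rcases Finset.mem_union.1 hmem with h | h
            · simp only [removeK, Finset.mem_filter] at h
              have hnot := (hK'pot τ hτ).2 i hiτ
              simp only [removeK, Finset.mem_filter, not_and, not_not] at hnot
              obtain ⟨q, hqK, hq2, hqi⟩ := hnot h.1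
              have hqπ : q ≠ π := fun he => hpt (he ▸ hq2)
              exact h.2 ⟨q, Finset.mem_erase.2 ⟨hqπ, hqK⟩, hq2, hqi⟩
            · obtain ⟨q, hqf, hq2⟩ := Finset.mem_image.1 h
              have hq := Finset.mem_filter.1 hqf
              have hqK' := Finset.mem_of_mem_erase hq.1
              have hqpot : PotentialPipe n T q.1.1 q.1.2 τ.2 :=
                hq2 ▸ (hK'pot q hqK').1
              have huniq := pipe_unique hqpot (hK'pot τ hτ).1 hq.2 hiτ
              have hqτ : q = τ :=
                Prod.ext_iff.2 ⟨Prod.ext_iff.2 ⟨huniq.1, huniq.2⟩, hq2⟩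
              exact Finset.ne_of_mem_erase hq.1 hqτ
          have hsub3 : addK (K'.erase τ) (removeK (K.erase π) L) i ⊆
              (insert π.2 A).erase τ.2 := fun t ht =>
            Finset.mem_erase.2 ⟨fun he => hτnot (he ▸ ht), hsub2 ht⟩
          have h1 : ((insert π.2 A).erase τ.2).card = (insert π.2 A).card - 1 :=
            Finset.card_erase_of_mem (Finset.mem_insert_of_mem hτ2A)
          have h2 : (insert π.2 A).card ≤ A.card + 1 := Finset.card_insert_le _ _
          have h3 := Finset.card_le_card hsub3
          omega
      · -- no pipe of K' passes through i: reduced layout is contained in L i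
        have hsub : addK (K'.erase τ) (removeK (K.erase π) L) i ⊆ L i := by
          intro t ht
          rcases Finset.mem_union.1 ht with h | h
          · exact Finset.mem_of_mem_filter t h
          · obtain ⟨q, hqf, hq2⟩ := Finset.mem_image.1 h
            have hq := Finset.mem_filter.1 hqf
            exact absurd ⟨q, Finset.mem_of_mem_erase hq.1, hq.2⟩ hiK'
        exact le_trans (Finset.card_le_card hsub) (hL.1 i hi).2
    · -- i is not interior to π: the reduced layout is contained in the old one
      have hsub : addK (K'.erase τ) (removeK (K.erase π) L) i ⊆ A := by
        intro t ht
        rcases Finset.mem_union.1 ht with h | h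
        · refine Finset.mem_union_left _ ?_
          simp only [removeK, Finset.mem_filter] at h ⊢
          refine ⟨h.1, fun hcov => ?_⟩
          obtain ⟨q, hqK, hq2, hqi⟩ := hcov
          by_cases hqπ : q = π
          · exact hiπ (hqπ ▸ hqi)
          · exact h.2 ⟨q, Finset.mem_erase.2 ⟨hqπ, hqK⟩, hq2, hqi⟩
        · refine Finset.mem_union_right _ ?_
          obtain ⟨q, hqf, hq2⟩ := Finset.mem_image.1 h
          have hq := Finset.mem_filter.1 hqf
          exact Finset.mem_image.2
            ⟨q, Finset.mem_filter.2 ⟨Finset.mem_of_mem_erase hq.1, hq.2⟩, hq2⟩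
      exact le_trans (Finset.card_le_card hsub) hC

/-- Lemma 6 (exchange-reduction): if `(K,K')` is an exchange pair of `L ∈ L̂`, `π ∈ K`,
`τ ∈ K'`, and `N(π) ∩ N(K') ⊆ N(τ)`, then `(K,K')` is not minimal: there is a smaller
exchange pair `(K̃,K̃')` with `K̃ ⊆ K`, `K̃' ⊆ K'` and at least one inclusion strict. -/
theorem exchange_reduction (n C : ℕ) (T L : ℕ → Finset ℕ) (hn : 1 ≤ n)
    (hout : ∀ i, i ∉ Finset.Icc 1 n → T i = ∅)
    (hL : InLhat C n T L)
    (K K' : Finset ((ℕ × ℕ) × ℕ)) (hex : Exchange C n T L K K')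
    (π τ : (ℕ × ℕ) × ℕ) (hπ : π ∈ K) (hτ : τ ∈ K')
    (hN : Npipe π ∩ K'.biUnion Npipe ⊆ Npipe τ) :
    ∃ K₀ K₀', Exchange C n T L K₀ K₀' ∧
      ((K₀ ⊆ K ∧ K₀' ⊂ K') ∨ (K₀ ⊂ K ∧ K₀' ⊆ K')) := by
  classical
  by_cases hπK' : π ∈ K'
  · refine ⟨K.erase π, K'.erase π,
      exchange_reduction_aux n C T L hL K K' hex π π hπ hπK'
        (fun i hi => (Finset.mem_inter.1 hi).1) (fun _ => rfl), ?_⟩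
    exact Or.inl ⟨Finset.erase_subset _ _, Finset.erase_ssubset hπK'⟩
  · refine ⟨K.erase π, K'.erase τ,
      exchange_reduction_aux n C T L hL K K' hex π τ hπ hτ hN
        (fun h => absurd h hπK'), ?_⟩
    exact Or.inl ⟨Finset.erase_subset _ _, Finset.erase_ssubset hτ⟩
end

section
/- Correctness of the greedy algorithm (Theorem 2, statement 1): Let GPCA process the ending times e = 2,…,n in increasing order, and for each e construct every candidate pipe (s,e,t) (with t ∈ T_s ∩ T_e, t ∉ T_i for s<i<e) whenever all intermediate magazine states currently have an empty slot. Then the resulting number of constructed pipes equals max{|P(M)| : M ∈ M}, and hence min{switches(M) : M ∈ M} = Σ_{i=1}^n |T_i| − C − GPCA(T_1,…,T_n;C). -/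
open Finset

namespace ToolSwitching

section IntervalSelection

variable {ι : Type*} (lo hi : ι → ℕ) (cap : ℕ → ℕ)

def load (A : Finset ι) (i : ℕ) : ℕ := #{c ∈ A | lo c < i ∧ i < hi c}

def FitsCap (A : Finset ι) : Prop := ∀ i, load lo hi A i ≤ cap i

def greedyStep [DecidableEq ι] (A : Finset ι) (c : ι) : Finset ι :=
  if ∀ i ∈ Ioo (lo c) (hi c), load lo hi A i < cap i then insert c A else A

def greedy [DecidableEq ι] (cs : List ι) (A : Finset ι) : Finset ι :=
  cs.foldl (greedyStep lo hi cap) A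

variable {lo hi cap}

lemma load_mono {A B : Finset ι} (h : A ⊆ B) (i : ℕ) : load lo hi A i ≤ load lo hi B i :=
  card_le_card (filter_subset_filter _ h)

lemma fitsCap_empty : FitsCap lo hi cap ∅ := fun i => by simp [load]

variable [DecidableEq ι]

lemma load_insert {A : Finset ι} {c : ι} (hc : c ∉ A) (i : ℕ) :
    load lo hi (insert c A) i = load lo hi A i + if lo c < i ∧ i < hi c then 1 else 0 := by
  unfold load
  rw [filter_insert]
  split_ifs
  · exact card_insert_of_notMem (fun h => hc (mem_filter.mp h).1)
  · rfl

lemma load_erase {A : Finset ι} {c : ι} (hc : c ∈ A) (i : ℕ) :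
    load lo hi A i = load lo hi (A.erase c) i + if lo c < i ∧ i < hi c then 1 else 0 := by
  rw [← load_insert (notMem_erase c A), insert_erase hc]

lemma exists_mem_notMem_of_load_lt {A O : Finset ι} {i : ℕ} (h : load lo hi A i < load lo hi O i) :
    ∃ J ∈ O, J ∉ A ∧ lo J < i ∧ i < hi J := by
  by_contra! hcon
  refine h.not_ge (card_le_card fun J hJ => ?_)
  obtain ⟨hJO, hJi⟩ := mem_filter.mp hJ
  by_contra hJA
  exact (hcon J hJO (fun hA => hJA (mem_filter.mpr ⟨hA, hJi⟩)) hJi.1).not_gt hJi.2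

lemma fitsCap_insert {O : Finset ι} {c : ι} (hO : FitsCap lo hi cap O)
    (hfree : ∀ i ∈ Ioo (lo c) (hi c), load lo hi O i < cap i) : FitsCap lo hi cap (insert c O) := by
  by_cases hcO : c ∈ O
  · rwa [Finset.insert_eq_of_mem hcO]
  intro i
  rw [load_insert hcO]
  split_ifs with hi'
  · exact hfree i (mem_Ioo.mpr hi')
  · exact hO i

/-- Swapping `J` for an interval `c` that ends no later only adds load at points left of `J`. -/
lemma fitsCap_swap {O : Finset ι} {c J : ι} (hO : FitsCap lo hi cap O) (hJ : J ∈ O)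
    (hc : c ∉ O) (hhi : hi c ≤ hi J)
    (hfree : ∀ i ∈ Ioo (lo c) (hi c), i ≤ lo J → load lo hi O i < cap i) :
    FitsCap lo hi cap (insert c (O.erase J)) := by
  intro i
  have hJi := load_erase (lo := lo) (hi := hi) hJ i
  rw [load_insert (fun h => hc (mem_of_mem_erase h))]
  have := hO i
  split_ifs at hJi ⊢ with hci hJi'
  · omega
  · have := hfree i (mem_Ioo.mpr hci) (by omega)
    omega
  all_goals omega

lemma exists_fitsCap_of_admissible {A O : Finset ι} {c : ι} (hO : FitsCap lo hi cap O)
    (hAO : A ⊆ O) (hadm : ∀ i ∈ Ioo (lo c) (hi c), load lo hi A i < cap i)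
    (hlate : ∀ J ∈ O, J ∉ A → hi c ≤ hi J) :
    ∃ O', FitsCap lo hi cap O' ∧ insert c A ⊆ O' ∧ O' ⊆ insert c O ∧ #O ≤ #O' := by
  by_cases hcO : c ∈ O
  · exact ⟨O, hO, insert_subset hcO hAO, subset_insert c O, le_rfl⟩
  by_cases hfree : ∀ i ∈ Ioo (lo c) (hi c), load lo hi O i < cap i
  · exact ⟨insert c O, fitsCap_insert hO hfree, insert_subset_insert c hAO, subset_rfl,
      card_le_card (subset_insert c O)⟩
  -- swap `c` for an interval of `O \ A` through the leftmost point of `c` saturated in `O`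
  have hsat : ∃ x, x ∈ Ioo (lo c) (hi c) ∧ ¬ load lo hi O x < cap x := by
    push Not at hfree ⊢
    exact hfree
  set x := Nat.find hsat
  obtain ⟨hx, hxsat⟩ := Nat.find_spec hsat
  obtain ⟨J, hJO, hJA, hJx, -⟩ :=
    exists_mem_notMem_of_load_lt (lt_of_lt_of_le (hadm x hx) (not_lt.mp hxsat))
  have hfree' : ∀ i ∈ Ioo (lo c) (hi c), i ≤ lo J → load lo hi O i < cap i := fun i hi hiJ => by
    have := Nat.find_min hsat (show i < x by omega)
    tauto
  refine ⟨insert c (O.erase J), fitsCap_swap hO hJO hcO (hlate J hJO hJA) hfree',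
    insert_subset_insert c fun a ha => mem_erase.mpr ⟨fun h => hJA (h ▸ ha), hAO ha⟩,
    insert_subset_insert c (erase_subset J O), ?_⟩
  rw [card_insert_of_notMem (fun h => hcO (mem_of_mem_erase h)), card_erase_of_mem hJO]
  omega

lemma mem_of_not_admissible {A O : Finset ι} {c : ι} (hO : FitsCap lo hi cap O) (hAO : A ⊆ O)
    (hcO : c ∈ O) (hrej : ¬ ∀ i ∈ Ioo (lo c) (hi c), load lo hi A i < cap i) : c ∈ A := by
  by_contra hcA
  push Not at hrej
  obtain ⟨x, hx, hxsat⟩ := hrej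
  have := load_mono (lo := lo) (hi := hi) (insert_subset hcO hAO) x
  rw [load_insert hcA, if_pos (mem_Ioo.mp hx)] at this
  have := hO x
  omega

lemma greedy_cons (c : ι) (cs : List ι) (A : Finset ι) :
    greedy lo hi cap (c :: cs) A = greedy lo hi cap cs (greedyStep lo hi cap A c) := rfl

lemma greedyStep_subset (A : Finset ι) (c : ι) : greedyStep lo hi cap A c ⊆ insert c A := by
  unfold greedyStep
  split_ifs
  exacts [subset_rfl, subset_insert c A]

lemma fitsCap_greedy {A : Finset ι} (hA : FitsCap lo hi cap A) (cs : List ι) :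
    FitsCap lo hi cap (greedy lo hi cap cs A) := by
  induction cs generalizing A with
  | nil => exact hA
  | cons c cs ih =>
    rw [greedy_cons, greedyStep]
    split_ifs with hadm
    exacts [ih (fitsCap_insert hA hadm), ih hA]

lemma mem_greedy {cs : List ι} {A : Finset ι} {c : ι} (hc : c ∈ greedy lo hi cap cs A) :
    c ∈ A ∨ c ∈ cs := by
  induction cs generalizing A with
  | nil => exact Or.inl hc
  | cons d cs ih =>
    rw [greedy_cons, greedyStep] at hc
    split_ifs at hc
    · rcases ih hc with h | h
      · rcases mem_insert.mp h with rfl | h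
        exacts [Or.inr List.mem_cons_self, Or.inl h]
      · exact Or.inr (List.mem_cons_of_mem d h)
    · exact (ih hc).imp_right (List.mem_cons_of_mem d)

theorem card_le_card_greedy {cs : List ι} (hcs : cs.Pairwise fun a b => hi a ≤ hi b)
    {A O : Finset ι} (hO : FitsCap lo hi cap O) (hAO : A ⊆ O) (hOA : ∀ J ∈ O, J ∈ A ∨ J ∈ cs) :
    #O ≤ #(greedy lo hi cap cs A) := by
  induction cs generalizing A O with
  | nil =>
    have : O ⊆ A := fun J hJ => (hOA J hJ).resolve_right List.not_mem_nil
    rw [Finset.Subset.antisymm this hAO]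
    rfl
  | cons c cs ih =>
    obtain ⟨hc, hcs⟩ := List.pairwise_cons.mp hcs
    rw [greedy_cons, greedyStep]
    split_ifs with hadm
    · have hlate : ∀ J ∈ O, J ∉ A → hi c ≤ hi J := fun J hJ hJA => by
        rcases List.mem_cons.mp ((hOA J hJ).resolve_left hJA) with rfl | h
        exacts [le_rfl, hc J h]
      obtain ⟨O', hO', hAO', hO'O, hcard⟩ := exists_fitsCap_of_admissible hO hAO hadm hlate
      refine hcard.trans (ih hcs hO' hAO' fun J hJ => ?_)
      rcases mem_insert.mp (hO'O hJ) with rfl | hJ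
      · exact Or.inl (mem_insert_self J A)
      rcases hOA J hJ with h | h
      · exact Or.inl (mem_insert_of_mem h)
      rcases List.mem_cons.mp h with rfl | h
      exacts [Or.inl (mem_insert_self J A), Or.inr h]
    · refine ih hcs hO hAO fun J hJ => ?_
      rcases hOA J hJ with h | h
      · exact Or.inl h
      rcases List.mem_cons.mp h with rfl | h
      exacts [Or.inl (mem_of_not_admissible hO hAO hJ hadm), Or.inr h]

end IntervalSelection

section Candidates

variable {n : ℕ} {T : ℕ → Finset ℕ}

/-- `c = ((s, e), t)` joins two consecutive occurrences of the tool `t`, at jobs `s < e`. -/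
def IsCandidate (n : ℕ) (T : ℕ → Finset ℕ) (c : (ℕ × ℕ) × ℕ) : Prop :=
  1 ≤ c.1.1 ∧ c.1.1 < c.1.2 ∧ c.1.2 ≤ n ∧ c.2 ∈ T c.1.1 ∧ c.2 ∈ T c.1.2 ∧
    ∀ i ∈ Ioo c.1.1 c.1.2, c.2 ∉ T i

lemma IsCandidate.eq_of_overlap {c₁ c₂ : (ℕ × ℕ) × ℕ} (h₁ : IsCandidate n T c₁)
    (h₂ : IsCandidate n T c₂) (ht : c₁.2 = c₂.2) (h₁₂ : c₁.1.1 < c₂.1.2) (h₂₁ : c₂.1.1 < c₁.1.2) :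
    c₁ = c₂ := by
  obtain ⟨-, -, -, hs₁, he₁, hgap₁⟩ := h₁
  obtain ⟨-, -, -, hs₂, he₂, hgap₂⟩ := h₂
  rw [ht] at hs₁ he₁ hgap₁
  have hs : c₁.1.1 = c₂.1.1 := by
    by_contra h
    rcases Nat.lt_or_gt_of_ne h with h | h
    exacts [hgap₁ _ (mem_Ioo.mpr ⟨h, h₂₁⟩) hs₂, hgap₂ _ (mem_Ioo.mpr ⟨h, h₁₂⟩) hs₁]
  have he : c₁.1.2 = c₂.1.2 := by
    by_contra h
    rcases Nat.lt_or_gt_of_ne h with h | h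
    exacts [hgap₂ _ (mem_Ioo.mpr ⟨h₂₁, h⟩) he₁, hgap₁ _ (mem_Ioo.mpr ⟨h₁₂, h⟩) he₂]
  exact Prod.ext (Prod.ext hs he) ht

lemma isPipe_iff {L : ℕ → Finset ℕ} {s e t : ℕ} :
    IsPipe n T L s e t ↔ IsCandidate n T ((s, e), t) ∧ ∀ i ∈ Ioo s e, t ∈ L i := by
  simp only [IsPipe, IsCandidate, forall_and]
  tauto

lemma mem_pipeSet {L : ℕ → Finset ℕ} {c : (ℕ × ℕ) × ℕ} :
    c ∈ pipeSet n T L ↔ IsPipe n T L c.1.1 c.1.2 c.2 := by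
  classical
  refine ⟨fun h => (mem_filter.mp h).2, fun h => mem_filter.mpr ⟨?_, h⟩⟩
  obtain ⟨h1, h2, h3, h4, -⟩ := h
  simp only [mem_product, mem_Icc, mem_biUnion]
  exact ⟨⟨⟨h1, by omega⟩, by omega, h3⟩, c.1.1, ⟨h1, by omega⟩, h4⟩

lemma isCandidate_of_mem_pipeSet {L : ℕ → Finset ℕ} {c : (ℕ × ℕ) × ℕ}
    (hc : c ∈ pipeSet n T L) : IsCandidate n T c :=
  (isPipe_iff.mp (mem_pipeSet.mp hc)).1

lemma pipeSet_mono {L L' : ℕ → Finset ℕ} (h : ∀ i, L i ⊆ L' i) :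
    pipeSet n T L ⊆ pipeSet n T L' := fun c hc => by
  rw [mem_pipeSet, isPipe_iff] at hc ⊢
  exact ⟨hc.1, fun i hi => h i (hc.2 i hi)⟩

def magOfPipes (T : ℕ → Finset ℕ) (A : Finset ((ℕ × ℕ) × ℕ)) (i : ℕ) : Finset ℕ :=
  T i ∪ {c ∈ A | c.1.1 < i ∧ i < c.1.2}.image Prod.snd

lemma mem_magOfPipes {A : Finset ((ℕ × ℕ) × ℕ)} {i t : ℕ} :
    t ∈ magOfPipes T A i ↔ t ∈ T i ∨ ∃ c ∈ A, (c.1.1 < i ∧ i < c.1.2) ∧ c.2 = t := by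
  simp only [magOfPipes, mem_union, mem_image, mem_filter, and_assoc]

lemma magOfPipes_empty : magOfPipes T ∅ = T := by
  funext i
  simp [magOfPipes]

lemma card_magOfPipes {A : Finset ((ℕ × ℕ) × ℕ)} (hA : ∀ c ∈ A, IsCandidate n T c) (i : ℕ) :
    #(magOfPipes T A i) = #(T i) + load (·.1.1) (·.1.2) A i := by
  rw [magOfPipes, card_union_of_disjoint, load, card_image_of_injOn]
  · intro c hc c' hc' h
    simp only [coe_filter, Set.mem_ofPred_eq] at hc hc'
    exact (hA c hc.1).eq_of_overlap (hA c' hc'.1) h (by omega) (by omega)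
  · refine disjoint_right.mpr fun t ht => ?_
    obtain ⟨c, hc, rfl⟩ := mem_image.mp ht
    obtain ⟨hcA, hci⟩ := mem_filter.mp hc
    exact (hA c hcA).2.2.2.2.2 i (mem_Ioo.mpr hci)

lemma addRange_magOfPipes (A : Finset ((ℕ × ℕ) × ℕ)) (c : (ℕ × ℕ) × ℕ) :
    addRange c.2 c.1.1 c.1.2 (magOfPipes T A) = magOfPipes T (insert c A) := by
  funext i
  ext t
  simp only [addRange]
  split_ifs with hci
  · simp only [mem_insert, mem_magOfPipes, exists_eq_or_imp, hci, true_and, eq_comm (a := t)]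
    tauto
  · simp only [mem_magOfPipes, mem_insert, exists_eq_or_imp, hci, false_and, false_or]

lemma subset_pipeSet_magOfPipes {A : Finset ((ℕ × ℕ) × ℕ)} (hA : ∀ c ∈ A, IsCandidate n T c) :
    A ⊆ pipeSet n T (magOfPipes T A) := fun c hc => by
  rw [mem_pipeSet, isPipe_iff]
  exact ⟨hA c hc, fun i hi => mem_magOfPipes.mpr (Or.inr ⟨c, hc, mem_Ioo.mp hi, rfl⟩)⟩

end Candidates

section GreedyRun

variable {n C : ℕ} {T : ℕ → Finset ℕ}

def prevOcc (T : ℕ → Finset ℕ) (e t : ℕ) : Option ℕ :=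
  ((List.range e).filter fun s => decide (t ∈ T s)).max?

lemma prevOcc_eq_some_iff {e t s : ℕ} :
    prevOcc T e t = some s ↔ s < e ∧ t ∈ T s ∧ ∀ b ∈ Ioo s e, t ∉ T b := by
  simp only [prevOcc, List.max?_eq_some_iff, List.mem_filter, List.mem_range, decide_eq_true_eq,
    mem_Ioo, and_imp]
  constructor
  · rintro ⟨⟨hs, hts⟩, hmax⟩
    exact ⟨hs, hts, fun b hsb hb htb => (hmax b hb htb).not_gt hsb⟩
  · rintro ⟨hs, hts, hgap⟩
    refine ⟨⟨hs, hts⟩, fun b hb htb => ?_⟩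
    by_contra h
    exact hgap b (by omega) hb htb

lemma prevOcc_of_isCandidate {c : (ℕ × ℕ) × ℕ} (hc : IsCandidate n T c) :
    prevOcc T c.1.2 c.2 = some c.1.1 :=
  prevOcc_eq_some_iff.mpr ⟨hc.2.1, hc.2.2.2.1, hc.2.2.2.2.2⟩

lemma isCandidate_of_prevOcc (hout : ∀ i, i ∉ Icc 1 n → T i = ∅) {e t s : ℕ} (hen : e ≤ n)
    (ht : t ∈ T e) (h : prevOcc T e t = some s) : IsCandidate n T ((s, e), t) := by
  obtain ⟨hse, hts, hgap⟩ := prevOcc_eq_some_iff.mp h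
  have hs : 1 ≤ s := by
    by_contra hs
    rw [hout s (by simp only [mem_Icc]; omega)] at hts
    exact notMem_empty t hts
  exact ⟨hs, hse, hen, hts, ht, hgap⟩

lemma gpcaStep_of_prevOcc_eq_none {M : ℕ → Finset ℕ} {e t : ℕ} (h : prevOcc T e t = none) :
    gpcaStep C T e M t = M := by
  unfold gpcaStep
  split
  · rfl
  · next heq => exact absurd (heq.symm.trans h) (by simp)

def freeSlots (C : ℕ) (T : ℕ → Finset ℕ) (i : ℕ) : ℕ := C - #(T i)

lemma gpcaStep_magOfPipes {A : Finset ((ℕ × ℕ) × ℕ)} (hA : ∀ c ∈ A, IsCandidate n T c)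
    {e t s : ℕ} (h : prevOcc T e t = some s) :
    gpcaStep C T e (magOfPipes T A) t =
      magOfPipes T (greedyStep (·.1.1) (·.1.2) (freeSlots C T) A ((s, e), t)) := by
  have hslack : ∀ i, #(magOfPipes T A i) < C ↔ load (·.1.1) (·.1.2) A i < freeSlots C T i :=
    fun i => by rw [card_magOfPipes hA, freeSlots]; omega
  unfold gpcaStep
  split
  · next heq => exact absurd (heq.symm.trans h) (by simp)
  · next s' heq =>
    obtain rfl : s' = s := Option.some_injective _ (heq.symm.trans h)
    simp only [greedyStep, hslack]
    split_ifs
    exacts [addRange_magOfPipes A ((s', e), t), rfl]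

def candOf (T : ℕ → Finset ℕ) (p : ℕ × ℕ) : Option ((ℕ × ℕ) × ℕ) :=
  (prevOcc T p.1 p.2).map fun s => ((s, p.1), p.2)

lemma foldl_gpcaStep_magOfPipes (hout : ∀ i, i ∉ Icc 1 n → T i = ∅) {ps : List (ℕ × ℕ)}
    (hps : ∀ p ∈ ps, p.1 ≤ n ∧ p.2 ∈ T p.1) {A : Finset ((ℕ × ℕ) × ℕ)}
    (hA : ∀ c ∈ A, IsCandidate n T c) :
    ps.foldl (fun M p => gpcaStep C T p.1 M p.2) (magOfPipes T A) =
      magOfPipes T (greedy (·.1.1) (·.1.2) (freeSlots C T) (ps.filterMap (candOf T)) A) := by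
  induction ps generalizing A with
  | nil => rfl
  | cons p ps ih =>
    have hps' : ∀ q ∈ ps, q.1 ≤ n ∧ q.2 ∈ T q.1 := fun q hq => hps q (List.mem_cons_of_mem p hq)
    rw [List.foldl_cons]
    rcases h : prevOcc T p.1 p.2 with _ | s
    · rw [List.filterMap_cons_none (by simp [candOf, h]), gpcaStep_of_prevOcc_eq_none h]
      exact ih hps' hA
    · obtain ⟨hpn, hpt⟩ := hps p List.mem_cons_self
      rw [List.filterMap_cons_some (b := ((s, p.1), p.2)) (by simp [candOf, h]), greedy_cons,
        gpcaStep_magOfPipes hA h]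
      refine ih hps' fun c hc => ?_
      rcases mem_insert.mp (greedyStep_subset A _ hc) with rfl | hc
      exacts [isCandidate_of_prevOcc hout hpn hpt h, hA c hc]

def gpcaPairs (n : ℕ) (T : ℕ → Finset ℕ) : List (ℕ × ℕ) :=
  (List.range n).flatMap fun e => ((T (e + 1)).sort (· ≤ ·)).map fun t => (e + 1, t)

lemma mem_gpcaPairs {p : ℕ × ℕ} : p ∈ gpcaPairs n T ↔ 1 ≤ p.1 ∧ p.1 ≤ n ∧ p.2 ∈ T p.1 := by
  obtain ⟨e, t⟩ := p
  simp only [gpcaPairs, List.mem_flatMap, List.mem_range, List.mem_map, mem_sort, Prod.mk.injEq]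
  constructor
  · rintro ⟨e, he, t, ht, rfl, rfl⟩
    exact ⟨by omega, by omega, ht⟩
  · rintro ⟨he1, hen, ht⟩
    exact ⟨e - 1, by omega, t, by rwa [Nat.sub_add_cancel he1], by omega, rfl⟩

lemma gpcaPairs_pairwise : (gpcaPairs n T).Pairwise fun p q => p.1 ≤ q.1 := by
  refine List.pairwise_flatMap.mpr ⟨fun e _ => ?_, ?_⟩
  · exact List.pairwise_map.mpr (List.pairwise_of_forall fun _ _ => le_rfl)
  · refine (List.pairwise_lt_range (n := n)).imp fun hlt p hp q hq => ?_
    obtain ⟨_, _, rfl⟩ := List.mem_map.mp hp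
    obtain ⟨_, _, rfl⟩ := List.mem_map.mp hq
    exact Nat.succ_le_succ hlt.le

lemma GPCA_eq_foldl :
    GPCA C n T = (gpcaPairs n T).foldl (fun M p => gpcaStep C T p.1 M p.2) T := by
  simp only [GPCA, gpcaPairs, List.foldl_flatMap, List.foldl_map]

def gpcaOrder (n : ℕ) (T : ℕ → Finset ℕ) : List ((ℕ × ℕ) × ℕ) :=
  (gpcaPairs n T).filterMap (candOf T)

lemma mem_gpcaOrder (hout : ∀ i, i ∉ Icc 1 n → T i = ∅) {c : (ℕ × ℕ) × ℕ} :
    c ∈ gpcaOrder n T ↔ IsCandidate n T c := by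
  simp only [gpcaOrder, List.mem_filterMap, candOf, Option.map_eq_some_iff]
  constructor
  · rintro ⟨p, hp, s, hs, rfl⟩
    obtain ⟨-, hpn, hpt⟩ := mem_gpcaPairs.mp hp
    exact isCandidate_of_prevOcc hout hpn hpt hs
  · intro hc
    exact ⟨(c.1.2, c.2), mem_gpcaPairs.mpr ⟨by have := hc.1; have := hc.2.1; omega,
      hc.2.2.1, hc.2.2.2.2.1⟩, c.1.1, prevOcc_of_isCandidate hc, rfl⟩

lemma gpcaOrder_pairwise : (gpcaOrder n T).Pairwise fun a b => a.1.2 ≤ b.1.2 := by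
  refine List.pairwise_filterMap.mpr (gpcaPairs_pairwise.imp fun hpq c hc c' hc' => ?_)
  simp only [candOf, Option.map_eq_some_iff] at hc hc'
  obtain ⟨_, _, rfl⟩ := hc
  obtain ⟨_, _, rfl⟩ := hc'
  exact hpq

def gpcaPipes (n C : ℕ) (T : ℕ → Finset ℕ) : Finset ((ℕ × ℕ) × ℕ) :=
  greedy (·.1.1) (·.1.2) (freeSlots C T) (gpcaOrder n T) ∅

lemma isCandidate_of_mem_gpcaPipes (hout : ∀ i, i ∉ Icc 1 n → T i = ∅)
    {c : (ℕ × ℕ) × ℕ} (hc : c ∈ gpcaPipes n C T) : IsCandidate n T c :=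
  (mem_gpcaOrder hout).mp ((mem_greedy hc).resolve_left (notMem_empty c))

theorem GPCA_eq_magOfPipes (hout : ∀ i, i ∉ Icc 1 n → T i = ∅) :
    GPCA C n T = magOfPipes T (gpcaPipes n C T) := by
  have := foldl_gpcaStep_magOfPipes (C := C) hout
    (fun p hp => (mem_gpcaPairs.mp hp).2) (A := ∅) (fun c hc => absurd hc (notMem_empty c))
  rwa [magOfPipes_empty, ← GPCA_eq_foldl] at this

end GreedyRun

section Optimality

variable {n C : ℕ} {T M : ℕ → Finset ℕ}

/-- A pipe through job `i` occupies a slot of `M i` not taken by the tools of `T i`. -/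
lemma fitsCap_pipeSet (hM : Feasible C n T M) :
    FitsCap (·.1.1) (·.1.2) (freeSlots C T) (pipeSet n T M) := by
  intro i
  by_cases hi : i ∈ Icc 1 n
  · obtain ⟨hTM, hMC, -⟩ := hM i hi
    have hinj : Set.InjOn Prod.snd
        (↑{c ∈ pipeSet n T M | c.1.1 < i ∧ i < c.1.2} : Set ((ℕ × ℕ) × ℕ)) := by
      intro c hc c' hc' h
      simp only [coe_filter, Set.mem_ofPred_eq] at hc hc'
      exact (isCandidate_of_mem_pipeSet hc.1).eq_of_overlap (isCandidate_of_mem_pipeSet hc'.1) h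
        (by omega) (by omega)
    have himage : {c ∈ pipeSet n T M | c.1.1 < i ∧ i < c.1.2}.image Prod.snd ⊆ M i \ T i := by
      intro t ht
      obtain ⟨c, hc, rfl⟩ := mem_image.mp ht
      obtain ⟨hcM, hci⟩ := mem_filter.mp hc
      obtain ⟨hcand, hpipe⟩ := isPipe_iff.mp (mem_pipeSet.mp hcM)
      exact mem_sdiff.mpr ⟨hpipe i (mem_Ioo.mpr hci), hcand.2.2.2.2.2 i (mem_Ioo.mpr hci)⟩
    rw [load, freeSlots, ← card_image_of_injOn hinj, ← hMC, ← card_sdiff_of_subset hTM]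
    exact card_le_card himage
  · refine (card_eq_zero.mpr (filter_eq_empty_iff.mpr fun c hc hci => hi ?_)).trans_le
      (Nat.zero_le _)
    dsimp only at hci
    obtain ⟨h1, -, hen, -⟩ := isCandidate_of_mem_pipeSet hc
    exact mem_Icc.mpr ⟨by omega, by omega⟩

theorem card_pipeSet_le_card_gpcaPipes (hout : ∀ i, i ∉ Icc 1 n → T i = ∅)
    (hM : Feasible C n T M) : #(pipeSet n T M) ≤ #(gpcaPipes n C T) :=
  card_le_card_greedy gpcaOrder_pairwise (fitsCap_pipeSet hM) (empty_subset _) fun _ hc =>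
    Or.inr ((mem_gpcaOrder hout).mpr (isCandidate_of_mem_pipeSet hc))

theorem card_pipeSet_le_card_pipeSet_GPCA (hout : ∀ i, i ∉ Icc 1 n → T i = ∅)
    (hM : Feasible C n T M) : #(pipeSet n T M) ≤ #(pipeSet n T (GPCA C n T)) := by
  rw [GPCA_eq_magOfPipes hout]
  exact (card_pipeSet_le_card_gpcaPipes hout hM).trans
    (card_le_card (subset_pipeSet_magOfPipes fun _ => isCandidate_of_mem_gpcaPipes hout))

end Optimality

section Completion

variable {n C : ℕ} {T L : ℕ → Finset ℕ}

lemma subset_fillFrom (C : ℕ) (src dst : Finset ℕ) : dst ⊆ fillFrom C src dst :=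
  subset_union_left

lemma mem_sdiff_of_mem_fillFrom_take {C : ℕ} {src dst : Finset ℕ} {t : ℕ}
    (ht : t ∈ (((src \ dst).sort (· ≤ ·)).take (C - #dst)).toFinset) : t ∈ src \ dst :=
  (mem_sort _).mp (List.mem_of_mem_take (List.mem_toFinset.mp ht))

lemma fillFrom_subset (C : ℕ) (src dst : Finset ℕ) : fillFrom C src dst ⊆ dst ∪ src :=
  union_subset subset_union_left fun _ ht =>
    mem_union_right _ (mem_sdiff.mp (mem_sdiff_of_mem_fillFrom_take ht)).1

lemma card_fillFrom {src dst : Finset ℕ} (h : #dst ≤ C) :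
    #(fillFrom C src dst) = min C #(dst ∪ src) := by
  have hnd : (((src \ dst).sort (· ≤ ·)).take (C - #dst)).Nodup :=
    (sort_nodup _ _).sublist (List.take_sublist _ _)
  have hdisj : Disjoint dst (((src \ dst).sort (· ≤ ·)).take (C - #dst)).toFinset :=
    disjoint_right.mpr fun _ ht => (mem_sdiff.mp (mem_sdiff_of_mem_fillFrom_take ht)).2
  rw [fillFrom, card_union_of_disjoint hdisj, List.card_toFinset, hnd.dedup, List.length_take,
    length_sort, union_comm, ← card_sdiff_add_card src dst]
  omega

lemma fillFrom_eq_union {src dst : Finset ℕ} (h : #(dst ∪ src) ≤ C) :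
    fillFrom C src dst = dst ∪ src := by
  refine eq_of_subset_of_card_le (fillFrom_subset C src dst) ?_
  rw [card_fillFrom ((card_le_card subset_union_left).trans h)]
  omega

def fillStep (C : ℕ) (M : ℕ → Finset ℕ) (p : ℕ × ℕ) : ℕ → Finset ℕ :=
  Function.update M p.2 (fillFrom C (M p.1) (M p.2))

lemma passPairs_concat (ps : List (ℕ × ℕ)) (p : ℕ × ℕ) (M : ℕ → Finset ℕ) :
    passPairs C (ps ++ [p]) M = fillStep C (passPairs C ps M) p := by
  rw [passPairs, List.foldl_append]
  rfl

lemma passPairs_induction {P : (ℕ → Finset ℕ) → Prop} {ps : List (ℕ × ℕ)} {M : ℕ → Finset ℕ}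
    (h₀ : P M) (hstep : ∀ M, ∀ p ∈ ps, P M → P (fillStep C M p)) : P (passPairs C ps M) := by
  induction ps generalizing M with
  | nil => exact h₀
  | cons p ps ih =>
    exact ih (hstep M p List.mem_cons_self h₀) fun M q hq => hstep M q (List.mem_cons_of_mem p hq)

lemma fillStep_apply_self (M : ℕ → Finset ℕ) (p : ℕ × ℕ) :
    fillStep C M p p.2 = fillFrom C (M p.1) (M p.2) :=
  Function.update_self _ _ _

lemma fillStep_apply_of_ne (M : ℕ → Finset ℕ) {p : ℕ × ℕ} {i : ℕ} (h : i ≠ p.2) :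
    fillStep C M p i = M i :=
  Function.update_of_ne h _ _

lemma subset_fillStep (M : ℕ → Finset ℕ) (p : ℕ × ℕ) (i : ℕ) : M i ⊆ fillStep C M p i := by
  by_cases h : i = p.2
  · subst h
    rw [fillStep_apply_self]
    exact subset_fillFrom _ _ _
  · rw [fillStep_apply_of_ne M h]

lemma subset_passPairs (ps : List (ℕ × ℕ)) (M : ℕ → Finset ℕ) (i : ℕ) :
    M i ⊆ passPairs C ps M i :=
  passPairs_induction (P := fun M' => M i ⊆ M' i) subset_rfl fun _ p _ h =>
    h.trans (subset_fillStep _ p i)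

lemma card_fillStep_le {M : ℕ → Finset ℕ} (hM : ∀ i, #(M i) ≤ C) (p : ℕ × ℕ) (i : ℕ) :
    #(fillStep C M p i) ≤ C := by
  by_cases h : i = p.2
  · subst h
    rw [fillStep_apply_self, card_fillFrom (hM _)]
    exact min_le_left _ _
  · rw [fillStep_apply_of_ne M h]
    exact hM i

lemma fillStep_subset {M : ℕ → Finset ℕ} {S : Finset ℕ} (hM : ∀ i, M i ⊆ S) (p : ℕ × ℕ)
    (i : ℕ) : fillStep C M p i ⊆ S := by
  by_cases h : i = p.2
  · subst h
    rw [fillStep_apply_self]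
    exact (fillFrom_subset _ _ _).trans (union_subset (hM _) (hM _))
  · rw [fillStep_apply_of_ne M h]
    exact hM i

lemma passPairs_subset {M : ℕ → Finset ℕ} {S : Finset ℕ} (hM : ∀ i, M i ⊆ S)
    (ps : List (ℕ × ℕ)) (i : ℕ) : passPairs C ps M i ⊆ S :=
  passPairs_induction (P := fun M' => ∀ i, M' i ⊆ S) hM (fun _ p _ h => fillStep_subset h p) i

lemma card_passPairs_le {M : ℕ → Finset ℕ} (hM : ∀ i, #(M i) ≤ C) (ps : List (ℕ × ℕ)) (i : ℕ) :
    #(passPairs C ps M i) ≤ C :=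
  passPairs_induction (P := fun M' => ∀ i, #(M' i) ≤ C) hM
    (fun _ p _ h => card_fillStep_le h p) i

def fwdPass (C m : ℕ) (L : ℕ → Finset ℕ) : ℕ → Finset ℕ :=
  passPairs C ((List.range m).map fun i => (i + 1, i + 2)) L

lemma fwdPass_full_or_subset (hL : ∀ i, #(L i) ≤ C) (m : ℕ) :
    #(fwdPass C m L (m + 1)) = C ∨ ∀ j ∈ Icc 1 (m + 1), L j ⊆ fwdPass C m L (m + 1) := by
  induction m with
  | zero =>
    refine Or.inr fun j hj => ?_
    obtain rfl : j = 1 := by simp only [mem_Icc] at hj; omega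
    rfl
  | succ m ih =>
    set F := fwdPass C m L
    have hstep : fwdPass C (m + 1) L (m + 1 + 1) = fillFrom C (F (m + 1)) (F (m + 2)) := by
      rw [fwdPass, List.range_succ, List.map_append, List.map_singleton, passPairs_concat]
      exact fillStep_apply_self _ (m + 1, m + 2)
    have hF : #(F (m + 2)) ≤ C := card_passPairs_le hL _ _
    rw [hstep]
    by_cases hbig : C ≤ #(F (m + 2) ∪ F (m + 1))
    · left
      rw [card_fillFrom hF]
      omega
    · right
      rw [fillFrom_eq_union (by omega)]
      intro j hj
      rcases (mem_Icc.mp hj).2.eq_or_lt with rfl | hlt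
      · exact (subset_passPairs _ L _).trans subset_union_left
      · refine ih.elim (fun hfull => absurd ?_ hbig) fun hsub =>
          (hsub j (mem_Icc.mpr ⟨(mem_Icc.mp hj).1, by omega⟩)).trans subset_union_right
        exact hfull.symm.le.trans (card_le_card subset_union_right)

lemma card_fwdPass (hn : 1 ≤ n) (hm : C < #((Icc 1 n).biUnion T)) (hL : ∀ i, #(L i) ≤ C)
    (hTL : ∀ j ∈ Icc 1 n, T j ⊆ L j) : #(passPairs C (fwdPairs n) L n) = C := by
  have := fwdPass_full_or_subset hL (n - 1)
  rw [Nat.sub_add_cancel hn] at this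
  refine this.resolve_right fun hsub => ?_
  have hU : (Icc 1 n).biUnion T ⊆ fwdPass C (n - 1) L n :=
    biUnion_subset.mpr fun j hj => (hTL j hj).trans (hsub j hj)
  have : #(fwdPass C (n - 1) L n) ≤ C := card_passPairs_le hL _ n
  have := card_le_card hU
  omega

lemma card_bwdPass {F : ℕ → Finset ℕ} (hF : ∀ i, #(F i) ≤ C) (hFn : #(F n) = C) {k : ℕ}
    (hk : k ≤ n - 1) {i : ℕ} (hki : n - k ≤ i) (hin : i ≤ n) :
    #(passPairs C ((List.range k).map fun i => (n - i, n - i - 1)) F i) = C := by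
  induction k generalizing i with
  | zero =>
    obtain rfl : i = n := by omega
    exact hFn
  | succ k ih =>
    rw [List.range_succ, List.map_append, List.map_singleton, passPairs_concat]
    by_cases hik : i = n - k - 1
    · subst hik
      rw [fillStep_apply_self, card_fillFrom (card_passPairs_le hF _ _)]
      exact min_eq_left ((ih (by omega) le_rfl (by omega)).symm.le.trans
        (card_le_card subset_union_right))
    · rw [fillStep_apply_of_ne _ hik]
      exact ih (by omega) (by omega) hin

lemma subset_toFullMag (L : ℕ → Finset ℕ) (i : ℕ) : L i ⊆ toFullMag C n L i :=
  (subset_passPairs _ L i).trans (subset_passPairs _ _ i)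

lemma toFullMag_feasible (hn : 1 ≤ n) (hm : C < #((Icc 1 n).biUnion T)) (hL : ∀ i, #(L i) ≤ C)
    (hTL : ∀ j ∈ Icc 1 n, T j ⊆ L j) (hLU : ∀ i, L i ⊆ (Icc 1 n).biUnion T) :
    Feasible C n T (toFullMag C n L) := by
  intro i hi
  obtain ⟨hi1, hin⟩ := mem_Icc.mp hi
  refine ⟨(hTL i hi).trans (subset_toFullMag L i), ?_, ?_⟩
  · exact card_bwdPass (card_passPairs_le hL _) (card_fwdPass hn hm hL hTL) le_rfl (by omega) hin
  · exact passPairs_subset (passPairs_subset hLU _) _ i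

/-- This forces every run of a tool through `M` to contain a job needing the tool. -/
def IsSupported (n : ℕ) (T M : ℕ → Finset ℕ) : Prop :=
  ∀ i ∈ Icc 1 n, ∀ t ∈ M i, ∃ j ∈ Icc 1 n, t ∈ T j ∧ ∀ k ∈ uIcc i j, t ∈ M k

lemma isSupported_magOfPipes {A : Finset ((ℕ × ℕ) × ℕ)} (hA : ∀ c ∈ A, IsCandidate n T c) :
    IsSupported n T (magOfPipes T A) := by
  intro i hi t ht
  rcases mem_magOfPipes.mp ht with ht | ⟨c, hcA, hci, rfl⟩
  · refine ⟨i, hi, ht, fun k hk => ?_⟩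
    rw [uIcc_self, mem_singleton] at hk
    exact hk ▸ mem_magOfPipes.mpr (Or.inl ht)
  · obtain ⟨h1, -, hen, -, he, -⟩ := hA c hcA
    refine ⟨c.1.2, mem_Icc.mpr ⟨by omega, hen⟩, he, fun k hk => ?_⟩
    rw [uIcc_of_le hci.2.le, mem_Icc] at hk
    rcases hk.2.eq_or_lt with rfl | hlt
    · exact mem_magOfPipes.mpr (Or.inl he)
    · exact mem_magOfPipes.mpr (Or.inr ⟨c, hcA, ⟨by omega, hlt⟩, rfl⟩)

lemma isSupported_fillStep {M : ℕ → Finset ℕ} (hM : IsSupported n T M) {p : ℕ × ℕ}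
    (hp : p.1 ∈ Icc 1 n) (hadj : p.2 = p.1 + 1 ∨ p.1 = p.2 + 1) :
    IsSupported n T (fillStep C M p) := by
  intro i hi t ht
  by_cases hip : i = p.2
  · subst hip
    rw [fillStep_apply_self] at ht
    rcases mem_union.mp (fillFrom_subset _ _ _ ht) with h | h
    · obtain ⟨j, hj, htj, hchain⟩ := hM _ hi t h
      exact ⟨j, hj, htj, fun k hk => subset_fillStep M p k (hchain k hk)⟩
    · obtain ⟨j, hj, htj, hchain⟩ := hM _ hp t h
      refine ⟨j, hj, htj, fun k hk => ?_⟩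
      by_cases hkp : k = p.2
      · rwa [hkp, fillStep_apply_self]
      · rw [mem_uIcc] at hk
        exact subset_fillStep M p k (hchain k (by rw [mem_uIcc]; omega))
  · rw [fillStep_apply_of_ne M hip] at ht
    obtain ⟨j, hj, htj, hchain⟩ := hM i hi t ht
    exact ⟨j, hj, htj, fun k hk => subset_fillStep M p k (hchain k hk)⟩

lemma isSupported_passPairs {M : ℕ → Finset ℕ} (hM : IsSupported n T M) {ps : List (ℕ × ℕ)}
    (hps : ∀ p ∈ ps, p.1 ∈ Icc 1 n ∧ (p.2 = p.1 + 1 ∨ p.1 = p.2 + 1)) :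
    IsSupported n T (passPairs C ps M) :=
  passPairs_induction hM fun _ p hp h => isSupported_fillStep h (hps p hp).1 (hps p hp).2

lemma isSupported_toFullMag (hL : IsSupported n T L) : IsSupported n T (toFullMag C n L) := by
  refine isSupported_passPairs (isSupported_passPairs hL ?_) ?_
  · simp only [fwdPairs, List.mem_map, List.mem_range, mem_Icc]
    rintro _ ⟨i, hi, rfl⟩
    omega
  · simp only [bwdPairs, List.mem_map, List.mem_range, mem_Icc]
    rintro _ ⟨i, hi, rfl⟩
    omega

end Completion

section Counting

variable {n : ℕ} {T M : ℕ → Finset ℕ}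

def occurrences (n : ℕ) (T : ℕ → Finset ℕ) : Finset (Σ _ : ℕ, ℕ) := (Icc 1 n).sigma T

def runStarts (n : ℕ) (M : ℕ → Finset ℕ) : Finset (Σ _ : ℕ, ℕ) :=
  {x ∈ (Icc 1 n).sigma M | x.1 = 1 ∨ x.2 ∉ M (x.1 - 1)}

lemma card_runStarts (hn : 1 ≤ n) : #(runStarts n M) = #(M 1) + switches n M := by
  rw [runStarts, filter_sigma' (p := fun j t => j = 1 ∨ t ∉ M (j - 1)), card_sigma,
    ← insert_Icc_add_one_left_eq_Icc hn, sum_insert (by simp), switches]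
  congr 1
  · simp
  · refine sum_nbij' (· - 1) (· + 1) ?_ ?_ ?_ ?_ fun j hj => ?_
    any_goals intro j hj; simp only [mem_Icc] at hj ⊢; omega
    rw [mem_Icc] at hj
    rw [Nat.sub_add_cancel (by omega : 1 ≤ j)]
    congr 1
    ext t
    simp only [mem_filter, mem_sdiff, show j ≠ 1 by omega, false_or]

/-- The first job of the run of `M` through `t ∈ M i`. -/
def runStart (M : ℕ → Finset ℕ) (i t : ℕ) : ℕ := Nat.findGreatest (fun k => t ∉ M k) (i - 1) + 1

lemma runStart_le {i t : ℕ} (hi : 1 ≤ i) : runStart M i t ≤ i := by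
  have := Nat.findGreatest_le (P := fun k => t ∉ M k) (i - 1)
  rw [runStart]
  omega

lemma mem_of_runStart_le {i k t : ℕ} (ht : t ∈ M i) (hk : runStart M i t ≤ k) (hki : k ≤ i) :
    t ∈ M k := by
  rcases hki.eq_or_lt with rfl | hlt
  · exact ht
  · rw [runStart] at hk
    exact not_not.mp
      (Nat.findGreatest_is_greatest (P := fun k => t ∉ M k) (n := i - 1) (by omega) (by omega))

lemma runStart_eq_one_or (i t : ℕ) : runStart M i t = 1 ∨ t ∉ M (runStart M i t - 1) := by
  rcases Nat.eq_zero_or_pos (Nat.findGreatest (fun k => t ∉ M k) (i - 1)) with h | h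
  · left
    rw [runStart, h]
  · right
    rw [runStart, Nat.add_sub_cancel]
    exact Nat.findGreatest_of_ne_zero rfl h.ne'

lemma runStart_eq {i j t : ℕ} (hj : 1 ≤ j) (hji : j ≤ i) (hrun : ∀ k ∈ Icc j i, t ∈ M k)
    (hstart : j = 1 ∨ t ∉ M (j - 1)) : runStart M i t = j := by
  have : Nat.findGreatest (fun k => t ∉ M k) (i - 1) = j - 1 :=
    Nat.findGreatest_eq_iff.mpr ⟨by omega, fun h => hstart.resolve_left (by omega),
      fun k hk hki => not_not.mpr (hrun k (mem_Icc.mpr ⟨by omega, by omega⟩))⟩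
  rw [runStart, this]
  omega

lemma exists_isPipe {i i' t : ℕ} (hi : 1 ≤ i) (hii' : i < i') (hi'n : i' ≤ n) (hti : t ∈ T i)
    (hti' : t ∈ T i') (hM : ∀ k ∈ Ioo i i', t ∈ M k) : ∃ s, IsPipe n T M s i' t := by
  let P := fun s => t ∈ T s
  have his : i ≤ Nat.findGreatest P (i' - 1) := Nat.le_findGreatest (by omega) hti
  have hsi' : Nat.findGreatest P (i' - 1) ≤ i' - 1 := Nat.findGreatest_le _
  refine ⟨Nat.findGreatest P (i' - 1), by omega, by omega, hi'n,
    Nat.findGreatest_spec (P := P) (by omega) hti, hti', fun k hk => ?_⟩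
  rw [mem_Ioo] at hk
  exact ⟨Nat.findGreatest_is_greatest (P := P) hk.1 (by omega), hM k (mem_Ioo.mpr ⟨by omega, hk.2⟩)⟩

open Classical in
noncomputable def nonPipeEnds (n : ℕ) (T M : ℕ → Finset ℕ) : Finset (Σ _ : ℕ, ℕ) :=
  {x ∈ occurrences n T | ¬ ∃ s, IsPipe n T M s x.1 x.2}

lemma card_occurrences_eq : #(occurrences n T) = #(pipeSet n T M) + #(nonPipeEnds n T M) := by
  classical
  rw [← card_filter_add_card_filter_not (s := occurrences n T)
    (fun x => ∃ s, IsPipe n T M s x.1 x.2), nonPipeEnds]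
  congr 1
  refine (card_nbij (fun c => ⟨c.1.2, c.2⟩) (fun c hc => ?_) (fun c hc c' hc' h => ?_)
    fun x hx => ?_).symm
  · obtain ⟨-, hse, hen, -, hte, -⟩ := mem_pipeSet.mp hc
    simp only [coe_filter, occurrences, mem_sigma, mem_Icc, Set.mem_ofPred_eq]
    exact ⟨⟨⟨by omega, hen⟩, hte⟩, c.1.1, mem_pipeSet.mp hc⟩
  · obtain ⟨he, ht⟩ := Sigma.mk.inj_iff.mp h
    have h₁ := isCandidate_of_mem_pipeSet hc
    have h₂ := isCandidate_of_mem_pipeSet hc'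
    exact h₁.eq_of_overlap h₂ (eq_of_heq ht) (he ▸ h₁.2.1) (he ▸ h₂.2.1)
  · obtain ⟨-, s, hs⟩ := mem_filter.mp hx
    exact ⟨((s, x.1), x.2), mem_pipeSet.mpr hs, rfl⟩

def toRunStart (M : ℕ → Finset ℕ) (x : Σ _ : ℕ, ℕ) : Σ _ : ℕ, ℕ := ⟨runStart M x.1 x.2, x.2⟩

lemma mapsTo_toRunStart (hTM : ∀ i ∈ Icc 1 n, T i ⊆ M i) :
    Set.MapsTo (toRunStart M) (nonPipeEnds n T M) (runStarts n M) := by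
  rintro ⟨i, t⟩ hx
  simp only [nonPipeEnds, occurrences, coe_filter, mem_sigma, Set.mem_ofPred_eq] at hx
  obtain ⟨⟨hi, hti⟩, -⟩ := hx
  have htM := hTM i hi hti
  have hle := runStart_le (M := M) (t := t) (mem_Icc.mp hi).1
  simp only [toRunStart, runStarts, coe_filter, mem_sigma, mem_Icc, Set.mem_ofPred_eq]
  exact ⟨⟨⟨Nat.le_add_left 1 _, hle.trans (mem_Icc.mp hi).2⟩, mem_of_runStart_le htM le_rfl hle⟩,
    runStart_eq_one_or i t⟩

lemma exists_isPipe_of_runStart_eq (hTM : ∀ i ∈ Icc 1 n, T i ⊆ M i) {i i' t : ℕ}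
    (hi : i ∈ Icc 1 n) (hti : t ∈ T i) (hi' : i' ∈ Icc 1 n) (hti' : t ∈ T i') (hlt : i < i')
    (h : runStart M i t = runStart M i' t) : ∃ s, IsPipe n T M s i' t := by
  refine exists_isPipe (mem_Icc.mp hi).1 hlt (mem_Icc.mp hi').2 hti hti' fun k hk => ?_
  have := runStart_le (M := M) (t := t) (mem_Icc.mp hi).1
  rw [mem_Ioo] at hk
  exact mem_of_runStart_le (hTM i' hi' hti') (by omega) hk.2.le

lemma injOn_toRunStart (hTM : ∀ i ∈ Icc 1 n, T i ⊆ M i) :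
    Set.InjOn (toRunStart M) (nonPipeEnds n T M) := by
  rintro ⟨i, t⟩ hx ⟨i', t'⟩ hy h
  obtain ⟨hj, ht⟩ := Sigma.mk.inj_iff.mp h
  obtain rfl : t = t' := eq_of_heq ht
  simp only [nonPipeEnds, occurrences, coe_filter, mem_sigma, Set.mem_ofPred_eq] at hx hy
  rcases lt_trichotomy i i' with hlt | rfl | hlt
  · exact absurd (exists_isPipe_of_runStart_eq hTM hx.1.1 hx.1.2 hy.1.1 hy.1.2 hlt hj) hy.2
  · rfl
  · exact absurd (exists_isPipe_of_runStart_eq hTM hy.1.1 hy.1.2 hx.1.1 hx.1.2 hlt hj.symm) hx.2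

/-- The first job needing `t` in the run of `t` starting at `j` is a preimage of `⟨j, t⟩`. -/
lemma surjOn_toRunStart (hTM : ∀ i ∈ Icc 1 n, T i ⊆ M i) (hS : IsSupported n T M) :
    Set.SurjOn (toRunStart M) (nonPipeEnds n T M) (runStarts n M) := by
  rintro ⟨j, t⟩ hx
  simp only [runStarts, coe_filter, mem_sigma, Set.mem_ofPred_eq] at hx
  obtain ⟨⟨hj, htj⟩, hstart⟩ := hx
  obtain ⟨j', hj', htj', hchain⟩ := hS j hj t htj
  rw [mem_Icc] at hj hj'
  have hjj' : j ≤ j' := by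
    by_contra h
    have : t ∈ M (j - 1) := hchain _ (by rw [mem_uIcc]; omega)
    exact hstart.elim (by omega) (· this)
  have hex : ∃ i, j ≤ i ∧ t ∈ T i := ⟨j', hjj', htj'⟩
  obtain ⟨hji, hti⟩ := Nat.find_spec hex
  have hij' := Nat.find_min' hex ⟨hjj', htj'⟩
  refine ⟨⟨Nat.find hex, t⟩, ?_, ?_⟩
  · simp only [nonPipeEnds, occurrences, coe_filter, mem_sigma, mem_Icc, Set.mem_ofPred_eq]
    refine ⟨⟨⟨by omega, by omega⟩, hti⟩, ?_⟩
    rintro ⟨s, hs1, hsi, -, hts, -, hpipe⟩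
    have hsj : s < j := by
      by_contra h
      exact Nat.find_min hex hsi ⟨by omega, hts⟩
    have : t ∈ M (j - 1) := by
      rcases (show s ≤ j - 1 by omega).eq_or_lt with h | h
      · exact h ▸ hTM s (mem_Icc.mpr ⟨hs1, by omega⟩) hts
      · exact (hpipe (j - 1) (mem_Ioo.mpr ⟨h, by omega⟩)).2
    exact hstart.elim (by omega) (· this)
  · rw [toRunStart, runStart_eq hj.1 hji (fun k hk => hchain k (by
      rw [mem_uIcc]; rw [mem_Icc] at hk; omega)) hstart]

theorem sum_card_le (hn : 1 ≤ n) (hTM : ∀ i ∈ Icc 1 n, T i ⊆ M i) :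
    ∑ i ∈ Icc 1 n, #(T i) ≤ #(pipeSet n T M) + (#(M 1) + switches n M) := by
  rw [← card_runStarts hn, ← card_sigma, ← occurrences, card_occurrences_eq]
  exact Nat.add_le_add_left
    (card_le_card_of_injOn _ (mapsTo_toRunStart hTM) (injOn_toRunStart hTM)) _

lemma card_one_of_feasible {C : ℕ} (hn : 1 ≤ n) (hM : Feasible C n T M) : #(M 1) = C :=
  (hM 1 (mem_Icc.mpr ⟨le_rfl, hn⟩)).2.1

theorem sum_card_le_of_feasible {C : ℕ} (hn : 1 ≤ n) (hM : Feasible C n T M) :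
    ∑ i ∈ Icc 1 n, #(T i) ≤ #(pipeSet n T M) + (C + switches n M) :=
  card_one_of_feasible hn hM ▸ sum_card_le hn fun i hi => (hM i hi).1

theorem sum_card_eq_of_isSupported (hn : 1 ≤ n) (hTM : ∀ i ∈ Icc 1 n, T i ⊆ M i)
    (hS : IsSupported n T M) :
    ∑ i ∈ Icc 1 n, #(T i) = #(pipeSet n T M) + (#(M 1) + switches n M) := by
  refine (sum_card_le hn hTM).antisymm ?_
  rw [← card_runStarts hn, ← card_sigma, ← occurrences, card_occurrences_eq]
  exact Nat.add_le_add_left (card_le_card_of_surjOn _ (surjOn_toRunStart hTM hS)) _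

end Counting

section GPCACompletion

variable {n C : ℕ} {T : ℕ → Finset ℕ}

lemma magOfPipes_subset_biUnion (hout : ∀ i, i ∉ Icc 1 n → T i = ∅)
    {A : Finset ((ℕ × ℕ) × ℕ)} (hA : ∀ c ∈ A, IsCandidate n T c) (i : ℕ) :
    magOfPipes T A i ⊆ (Icc 1 n).biUnion T := fun t ht => by
  rcases mem_magOfPipes.mp ht with ht | ⟨c, hcA, -, rfl⟩
  · by_cases hi : i ∈ Icc 1 n
    · exact mem_biUnion.mpr ⟨i, hi, ht⟩
    · exact absurd (hout i hi ▸ ht) (notMem_empty t)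
  · obtain ⟨h1, hse, hen, hs, -⟩ := hA c hcA
    exact mem_biUnion.mpr ⟨c.1.1, mem_Icc.mpr ⟨h1, by omega⟩, hs⟩

lemma card_GPCA_le (hout : ∀ i, i ∉ Icc 1 n → T i = ∅) (hTc : ∀ i ∈ Icc 1 n, #(T i) ≤ C)
    (i : ℕ) : #(GPCA C n T i) ≤ C := by
  rw [GPCA_eq_magOfPipes hout, card_magOfPipes fun _ => isCandidate_of_mem_gpcaPipes hout]
  have hfit : load (·.1.1) (·.1.2) (gpcaPipes n C T) i ≤ freeSlots C T i :=
    fitsCap_greedy fitsCap_empty _ i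
  have hT : #(T i) ≤ C := by
    by_cases hi : i ∈ Icc 1 n
    · exact hTc i hi
    · simp [hout i hi]
  rw [freeSlots] at hfit
  omega

theorem feasible_toFullMag_GPCA (hn : 1 ≤ n) (hout : ∀ i, i ∉ Icc 1 n → T i = ∅)
    (hTc : ∀ i ∈ Icc 1 n, #(T i) ≤ C) (hm : C < #((Icc 1 n).biUnion T)) :
    Feasible C n T (toFullMag C n (GPCA C n T)) := by
  refine toFullMag_feasible hn hm (card_GPCA_le hout hTc) (fun j _ => ?_) fun i => ?_
  all_goals rw [GPCA_eq_magOfPipes hout]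
  exacts [subset_union_left,
    magOfPipes_subset_biUnion hout (fun _ => isCandidate_of_mem_gpcaPipes hout) i]

theorem isSupported_toFullMag_GPCA (hout : ∀ i, i ∉ Icc 1 n → T i = ∅) :
    IsSupported n T (toFullMag C n (GPCA C n T)) := by
  refine isSupported_toFullMag ?_
  rw [GPCA_eq_magOfPipes hout]
  exact isSupported_magOfPipes fun _ => isCandidate_of_mem_gpcaPipes hout

end GPCACompletion

end ToolSwitching

open ToolSwitching

/-- Theorem 2, statement 1 (correctness of GPCA): the greedy pipe construction algorithm
realizes the maximum possible number of pipes, hence the minimum number of switches over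
all feasible full-magazine sequences is `∑|T i| − C − GPCA(T;C)`. -/
theorem gpca_correct (n C : ℕ) (T : ℕ → Finset ℕ) (hn : 1 ≤ n)
    (hout : ∀ i, i ∉ Finset.Icc 1 n → T i = ∅)
    (hTc : ∀ i ∈ Finset.Icc 1 n, (T i).card ≤ C)
    (hm : C < ((Finset.Icc 1 n).biUnion T).card) :
    (pipeSet n T (GPCA C n T)).card
        = sSup {k | ∃ M, Feasible C n T M ∧ (pipeSet n T M).card = k} ∧
    sInf {k | ∃ M, Feasible C n T M ∧ switches n M = k}
        = (∑ i ∈ Finset.Icc 1 n, (T i).card) - C - (pipeSet n T (GPCA C n T)).card := by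
  set F := toFullMag C n (GPCA C n T)
  have hF : Feasible C n T F := feasible_toFullMag_GPCA hn hout hTc hm
  have hmax : ∀ M, Feasible C n T M → #(pipeSet n T M) ≤ #(pipeSet n T (GPCA C n T)) :=
    fun M hM => card_pipeSet_le_card_pipeSet_GPCA hout hM
  have hFp : #(pipeSet n T F) = #(pipeSet n T (GPCA C n T)) :=
    (hmax F hF).antisymm (card_le_card (pipeSet_mono (subset_toFullMag _)))
  have hFsw := sum_card_eq_of_isSupported hn (fun i hi => (hF i hi).1)
    (isSupported_toFullMag_GPCA (C := C) hout)
  rw [card_one_of_feasible hn hF, hFp] at hFsw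
  constructor
  · symm
    refine IsGreatest.csSup_eq ⟨⟨F, hF, hFp⟩, ?_⟩
    rintro k ⟨M, hM, rfl⟩
    exact hmax M hM
  · refine IsLeast.csInf_eq ⟨⟨F, hF, by omega⟩, ?_⟩
    rintro k ⟨M, hM, rfl⟩
    have := sum_card_le_of_feasible hn hM
    have := hmax M hM
    omega
end
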